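/- arXiv:2601.08929 — 10 statements merged into one kernel-verified Lean document; each statement's English description precedes it below -/
import Mathlib

section
/- Let f : ℝ → ℝ and suppose there are coefficients a_m ≥ 0 (m ≥ 2) such that f(t) = ∑_{m=2}^∞ a_m (t−1)^m converges for all t ≥ 0 appearing as a ratio value. Then for every n and every finite family of jointly distributed finitely-supported random variables (X₁,…,Xₙ) with strictly positive marginals, the f-mutual-information matrix M^(f) with entries M^(f)_{ij} = I_f(p_{ij}) is positive semidefinite (no weak-dependence restriction is needed). -/
open scoped Classical

noncomputable section

/-- First marginal of a joint pmf on `A × B`. -/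
def mfst {A B : Type} [Fintype A] [Fintype B] (p : A → B → ℝ) (x : A) : ℝ :=
  ∑ y, p x y

/-- Second marginal of a joint pmf on `A × B`. -/
def msnd {A B : Type} [Fintype A] [Fintype B] (p : A → B → ℝ) (y : B) : ℝ :=
  ∑ x, p x y

/-- The `f`-mutual information of a joint pmf `p` on `A × B`:
`I_f(p) = ∑_{a,b} p₁(a) p₂(b) f (p(a,b) / (p₁(a) p₂(b)))`. -/
def fMI (f : ℝ → ℝ) {A B : Type} [Fintype A] [Fintype B] (p : A → B → ℝ) : ℝ :=
  ∑ x, ∑ y, mfst p x * msnd p y * f (p x y / (mfst p x * msnd p y))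

/-- A joint pmf on a finite product `∏ i, A i`. -/
def IsJointPMF {n : ℕ} {A : Fin n → Type} [∀ i, Fintype (A i)]
    (P : (∀ i, A i) → ℝ) : Prop :=
  (∀ x, 0 ≤ P x) ∧ ∑ x, P x = 1

/-- The `i`-th marginal `p_i`. -/
def marg {n : ℕ} {A : Fin n → Type} [∀ i, Fintype (A i)]
    (P : (∀ i, A i) → ℝ) (i : Fin n) (a : A i) : ℝ :=
  ∑ x, if x i = a then P x else 0

/-- The `(i,j)` pairwise marginal `p_{ij}`; for `i = j` this equals
`p_i(a) · [a = b]`, the joint law of `(X_i, X_i)`. -/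
def pairMarg {n : ℕ} {A : Fin n → Type} [∀ i, Fintype (A i)]
    (P : (∀ i, A i) → ℝ) (i j : Fin n) (a : A i) (b : A j) : ℝ :=
  ∑ x, if x i = a ∧ x j = b then P x else 0

/-- All one-dimensional marginals are strictly positive. -/
def PosMarg {n : ℕ} {A : Fin n → Type} [∀ i, Fintype (A i)]
    (P : (∀ i, A i) → ℝ) : Prop :=
  ∀ (i : Fin n) (a : A i), 0 < marg P i a

/-- `δ`-pairwise-weak dependence: all off-diagonal joint-to-product ratios lie in
`(1 - δ, 1 + δ)`. -/
def WeakDep {n : ℕ} {A : Fin n → Type} [∀ i, Fintype (A i)]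
    (δ : ℝ) (P : (∀ i, A i) → ℝ) : Prop :=
  ∀ i j : Fin n, i ≠ j → ∀ (a : A i) (b : A j),
    pairMarg P i j a b / (marg P i a * marg P j b) ∈ Set.Ioo (1 - δ) (1 + δ)

/-- The `f`-mutual-information matrix `M^{(f)}_{ij} = I_f(p_{ij})`. -/
def MIMat {n : ℕ} {A : Fin n → Type} [∀ i, Fintype (A i)]
    (f : ℝ → ℝ) (P : (∀ i, A i) → ℝ) : Matrix (Fin n) (Fin n) ℝ :=
  Matrix.of fun i j => fMI f (pairMarg P i j)

namespace Stmt1Aux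

variable {n : ℕ} {A : Fin n → Type} [∀ i, Fintype (A i)]

/-- Centered indicator function. -/
def phi (P : (∀ i, A i) → ℝ) (i : Fin n) (a : A i) (x : ∀ i, A i) : ℝ :=
  (if x i = a then 1 else 0) / marg P i a - 1

lemma mfst_pairMarg (P : (∀ i, A i) → ℝ) (i j : Fin n) (a : A i) :
    mfst (pairMarg P i j) a = marg P i a := by
  unfold mfst pairMarg marg
  rw [Finset.sum_comm]
  refine Finset.sum_congr rfl fun x _ => ?_
  by_cases h : x i = a <;> simp [h, Finset.sum_ite_eq]

lemma msnd_pairMarg (P : (∀ i, A i) → ℝ) (i j : Fin n) (b : A j) :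
    msnd (pairMarg P i j) b = marg P j b := by
  unfold msnd pairMarg marg
  rw [Finset.sum_comm]
  refine Finset.sum_congr rfl fun x _ => ?_
  by_cases h : x j = b <;> simp [h, Finset.sum_ite_eq]

lemma ratio_sub_one {P : (∀ i, A i) → ℝ} (hP : IsJointPMF P) (hpos : PosMarg P)
    (i j : Fin n) (a : A i) (b : A j) :
    pairMarg P i j a b / (marg P i a * marg P j b) - 1
      = ∑ x, P x * (phi P i a x * phi P j b x) := by
  have hia := (hpos i a).ne'
  have hjb := (hpos j b).ne'
  have key : ∀ x : (∀ i, A i), P x * (phi P i a x * phi P j b x)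
      = (if x i = a ∧ x j = b then P x else 0) / (marg P i a * marg P j b)
        - (if x i = a then P x else 0) / marg P i a
        - (if x j = b then P x else 0) / marg P j b + P x := by
    intro x
    by_cases h1 : x i = a <;> by_cases h2 : x j = b <;>
      simp [phi, h1, h2] <;> field_simp <;> ring
  simp only [key]
  rw [Finset.sum_add_distrib, Finset.sum_sub_distrib, Finset.sum_sub_distrib,
    ← Finset.sum_div, ← Finset.sum_div, ← Finset.sum_div]
  rw [show (∑ x, if x i = a ∧ x j = b then P x else 0) = pairMarg P i j a b from rfl,
    show (∑ x, if x i = a then P x else 0) = marg P i a from rfl,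
    show (∑ x, if x j = b then P x else 0) = marg P j b from rfl, hP.2,
    div_self hia, div_self hjb]
  ring

lemma sum_rotate {α β γ : Type} [Fintype α] [Fintype β] [Fintype γ] (g : α → β → γ → ℝ) :
    ∑ i, ∑ j, ∑ x, g i j x = ∑ x, ∑ i, ∑ j, g i j x :=
  calc ∑ i, ∑ j, ∑ x, g i j x
      = ∑ i, ∑ x, ∑ j, g i j x := Finset.sum_congr rfl fun i _ => Finset.sum_comm
    _ = ∑ x, ∑ i, ∑ j, g i j x := Finset.sum_comm

lemma gram {ι : Type} [Fintype ι] (W : ℝ) (hW : 0 ≤ W) (U : ι → ℝ) :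
    0 ≤ ∑ i, ∑ j, W * (U i * U j) := by
  have h : (∑ i, ∑ j, W * (U i * U j)) = W * ((∑ i, U i) * (∑ i, U i)) := by
    simp only [Finset.sum_mul, Finset.mul_sum]
    exact Finset.sum_comm
  rw [h]
  exact mul_nonneg hW (mul_self_nonneg _)

lemma Q_nonneg {P : (∀ i, A i) → ℝ} (hP : IsJointPMF P) (hpos : PosMarg P)
    (y : Fin n → ℝ) (k : ℕ) :
    0 ≤ ∑ i, ∑ j, y i * y j * (∑ a, ∑ b, marg P i a * marg P j b *
      (pairMarg P i j a b / (marg P i a * marg P j b) - 1) ^ k) := by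
  have expand : ∀ (i j : Fin n) (a : A i) (b : A j),
      (pairMarg P i j a b / (marg P i a * marg P j b) - 1) ^ k
        = ∑ xs : Fin k → (∀ i, A i), (∏ l, P (xs l)) *
            ((∏ l, phi P i a (xs l)) * (∏ l, phi P j b (xs l))) := by
    intro i j a b
    rw [ratio_sub_one hP hpos, Fintype.sum_pow]
    refine Finset.sum_congr rfl fun xs _ => ?_
    simp [Finset.prod_mul_distrib]
  have h1 : ∀ i j : Fin n,
      y i * y j * (∑ a, ∑ b, marg P i a * marg P j b *
        (pairMarg P i j a b / (marg P i a * marg P j b) - 1) ^ k)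
      = ∑ xs : Fin k → (∀ i, A i), (∏ l, P (xs l)) *
          ((y i * ∑ a, marg P i a * ∏ l, phi P i a (xs l)) *
           (y j * ∑ b, marg P j b * ∏ l, phi P j b (xs l))) := by
    intro i j
    calc y i * y j * (∑ a, ∑ b, marg P i a * marg P j b *
          (pairMarg P i j a b / (marg P i a * marg P j b) - 1) ^ k)
        = ∑ a, ∑ b, ∑ xs : Fin k → (∀ i, A i), y i * y j * (marg P i a * marg P j b *
            ((∏ l, P (xs l)) * ((∏ l, phi P i a (xs l)) * (∏ l, phi P j b (xs l))))) := by
          simp only [expand, Finset.mul_sum]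
      _ = ∑ xs : Fin k → (∀ i, A i), ∑ a, ∑ b, y i * y j * (marg P i a * marg P j b *
            ((∏ l, P (xs l)) * ((∏ l, phi P i a (xs l)) * (∏ l, phi P j b (xs l))))) :=
          sum_rotate _
      _ = ∑ xs : Fin k → (∀ i, A i), (∏ l, P (xs l)) *
            ((y i * ∑ a, marg P i a * ∏ l, phi P i a (xs l)) *
             (y j * ∑ b, marg P j b * ∏ l, phi P j b (xs l))) := by
          refine Finset.sum_congr rfl fun xs _ => ?_
          simp only [Finset.mul_sum, Finset.sum_mul]
          rw [Finset.sum_comm]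
          exact Finset.sum_congr rfl fun b _ => Finset.sum_congr rfl fun a _ => by ring
  simp only [h1]
  rw [sum_rotate]
  refine Finset.sum_nonneg fun xs _ => ?_
  exact gram _ (Finset.prod_nonneg fun l _ => hP.1 _)
    (fun i => y i * ∑ a, marg P i a * ∏ l, phi P i a (xs l))

lemma fMI_pair_symm (f : ℝ → ℝ) (P : (∀ i, A i) → ℝ) (i j : Fin n) :
    fMI f (pairMarg P j i) = fMI f (pairMarg P i j) := by
  unfold fMI
  rw [Finset.sum_comm]
  refine Finset.sum_congr rfl fun a _ => Finset.sum_congr rfl fun b _ => ?_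
  simp only [mfst_pairMarg, msnd_pairMarg]
  have h1 : pairMarg P j i b a = pairMarg P i j a b :=
    Finset.sum_congr rfl fun x _ => if_congr and_comm rfl rfl
  rw [h1, mul_comm (marg P j b) (marg P i a)]

end Stmt1Aux

/-- If `f(t) = ∑_{m≥2} a_m (t-1)^m` with `a_m ≥ 0`, the series converging
at every joint-to-product ratio value of the family, then the `f`-MI matrix is PSD
(no weak-dependence restriction needed). -/
theorem stmt_1 (f : ℝ → ℝ) (c : ℕ → ℝ) (hc : ∀ m, 0 ≤ c m)
    (n : ℕ) (A : Fin n → Type) [∀ i, Fintype (A i)] (P : (∀ i, A i) → ℝ)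
    (hP : IsJointPMF P) (hpos : PosMarg P)
    (hconv : ∀ (i j : Fin n) (a : A i) (b : A j),
      HasSum
        (fun m : ℕ =>
          c m * (pairMarg P i j a b / (marg P i a * marg P j b) - 1) ^ (m + 2))
        (f (pairMarg P i j a b / (marg P i a * marg P j b)))) :
    (MIMat f P).PosSemidef := by
  classical
  constructor
  · show (MIMat f P).conjTranspose = MIMat f P
    ext i j
    simp only [Matrix.conjTranspose_apply, MIMat, Matrix.of_apply, star_trivial]
    exact Stmt1Aux.fMI_pair_symm f P i j
  · intro x
    have hMI : ∀ i j : Fin n, HasSum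
        (fun m => c m * ∑ a, ∑ b, marg P i a * marg P j b *
          (pairMarg P i j a b / (marg P i a * marg P j b) - 1) ^ (m + 2))
        (MIMat f P i j) := by
      intro i j
      have h2 : HasSum
          (fun m => ∑ a : A i, ∑ b : A j, marg P i a * marg P j b *
            (c m * (pairMarg P i j a b / (marg P i a * marg P j b) - 1) ^ (m + 2)))
          (∑ a : A i, ∑ b : A j, marg P i a * marg P j b *
            f (pairMarg P i j a b / (marg P i a * marg P j b))) :=
        hasSum_sum fun a _ => hasSum_sum fun b _ => (hconv i j a b).mul_left _
      have h3 : MIMat f P i j = ∑ a : A i, ∑ b : A j, marg P i a * marg P j b *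
          f (pairMarg P i j a b / (marg P i a * marg P j b)) := by
        simp only [MIMat, Matrix.of_apply, fMI, Stmt1Aux.mfst_pairMarg,
          Stmt1Aux.msnd_pairMarg]
      rw [h3]
      have h4 : ∀ m : ℕ, (∑ a : A i, ∑ b : A j, marg P i a * marg P j b *
            (c m * (pairMarg P i j a b / (marg P i a * marg P j b) - 1) ^ (m + 2)))
          = c m * ∑ a, ∑ b, marg P i a * marg P j b *
            (pairMarg P i j a b / (marg P i a * marg P j b) - 1) ^ (m + 2) := by
        intro m
        rw [Finset.mul_sum]
        exact Finset.sum_congr rfl fun a _ => by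
          rw [Finset.mul_sum]
          exact Finset.sum_congr rfl fun b _ => by ring
      simpa only [h4] using h2
    have hq : HasSum
        (fun m => ∑ i, ∑ j, x i * x j * (c m * ∑ a, ∑ b, marg P i a * marg P j b *
          (pairMarg P i j a b / (marg P i a * marg P j b) - 1) ^ (m + 2)))
        (∑ i, ∑ j, x i * x j * MIMat f P i j) :=
      hasSum_sum fun i _ => hasSum_sum fun j _ => (hMI i j).mul_left _
    have h0 : (0:ℝ) ≤ ∑ i, ∑ j, x i * x j * MIMat f P i j := by
      refine hasSum_le (fun m => ?_) hasSum_zero hq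
      have h5 : (∑ i, ∑ j, x i * x j * (c m * ∑ a, ∑ b, marg P i a * marg P j b *
            (pairMarg P i j a b / (marg P i a * marg P j b) - 1) ^ (m + 2)))
          = c m * ∑ i, ∑ j, x i * x j * (∑ a, ∑ b, marg P i a * marg P j b *
            (pairMarg P i j a b / (marg P i a * marg P j b) - 1) ^ (m + 2)) := by
        rw [Finset.mul_sum]
        exact Finset.sum_congr rfl fun i _ => by
          rw [Finset.mul_sum]
          exact Finset.sum_congr rfl fun j _ => by ring
      rw [h5]
      exact mul_nonneg (hc m) (Stmt1Aux.Q_nonneg hP hpos x (m + 2))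
    have hdot : dotProduct (star x) ((MIMat f P).mulVec x)
        = ∑ i, ∑ j, x i * x j * MIMat f P i j := by
      simp only [dotProduct, Matrix.mulVec, Pi.star_apply, star_trivial]
      exact Finset.sum_congr rfl fun i _ => by
        rw [Finset.mul_sum]
        exact Finset.sum_congr rfl fun j _ => by ring
    have hsum : (x.sum fun i xi => x.sum fun j xj => star xi * MIMat f P i j * xj)
        = ∑ i, ∑ j, x i * x j * MIMat f P i j := by
      rw [Finsupp.sum_fintype _ _ (by simp)]
      refine Finset.sum_congr rfl fun i _ => ?_
      rw [Finsupp.sum_fintype _ _ (by simp)]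
      refine Finset.sum_congr rfl fun j _ => ?_
      simp only [star_trivial]
      ring
    rw [hsum]
    exact h0
end
end

section
/- Fix an integer m ≥ 2. For every finite family of jointly distributed finitely-supported random variables (X₁,…,Xₙ) with strictly positive marginals, the n×n matrix with entries M^(m)_{ij} := ∑_{a,b} (p_{ij}(a,b) − p_i(a)p_j(b))^m / (p_i(a)p_j(b))^{m−1} is positive semidefinite. -/
open scoped Classical

noncomputable section

namespace Stmt3Aux

variable {n : ℕ} {A : Fin n → Type} [∀ i, Fintype (A i)]

/-- Centered indicator. -/
def cent (P : (∀ i, A i) → ℝ) (i : Fin n) (a : A i) (x : ∀ i, A i) : ℝ :=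
  (if x i = a then 1 else 0) - marg P i a

lemma pm_sub (P : (∀ i, A i) → ℝ) (hP : IsJointPMF P) (i j : Fin n) (a : A i) (b : A j) :
    pairMarg P i j a b - marg P i a * marg P j b
      = ∑ x, P x * (cent P i a x * cent P j b x) := by
  have key : ∀ x : (∀ i, A i), P x * (cent P i a x * cent P j b x)
      = (if x i = a ∧ x j = b then P x else 0)
        - (if x i = a then P x else 0) * marg P j b
        - marg P i a * (if x j = b then P x else 0)
        + marg P i a * marg P j b * P x := by
    intro x
    by_cases h1 : x i = a <;> by_cases h2 : x j = b <;>
      simp [cent, h1, h2] <;> ring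
  rw [Finset.sum_congr rfl fun x _ => key x]
  simp only [Finset.sum_add_distrib, Finset.sum_sub_distrib, ← Finset.sum_mul,
    ← Finset.mul_sum]
  rw [hP.2]
  simp only [pairMarg, marg]
  ring

lemma sum_pow {X : Type} [Fintype X] (g : X → ℝ) (m : ℕ) :
    (∑ x, g x) ^ m = ∑ p : Fin m → X, ∏ k, g (p k) := by
  calc (∑ x, g x) ^ m = ∏ _k : Fin m, ∑ x, g x := by
        simp [Finset.prod_const]
    _ = ∑ p ∈ Fintype.piFinset (fun _ : Fin m => (Finset.univ : Finset X)),
          ∏ k, g (p k) := Finset.prod_univ_sum _ _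
    _ = _ := by rw [Fintype.piFinset_univ]

def uu (P : (∀ i, A i) → ℝ) (m : ℕ) (i : Fin n) (xs : Fin m → (∀ i, A i)) : ℝ :=
  ∑ a : A i, (∏ k, cent P i a (xs k)) / (marg P i a) ^ (m - 1)

lemma rep (m : ℕ) (P : (∀ i, A i) → ℝ) (hP : IsJointPMF P) (i j : Fin n) :
    (∑ a, ∑ b, (pairMarg P i j a b - marg P i a * marg P j b) ^ m /
        (marg P i a * marg P j b) ^ (m - 1))
      = ∑ xs : Fin m → (∀ i, A i), (∏ k, P (xs k)) * uu P m i xs * uu P m j xs := by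
  have step1 : ∀ (a : A i) (b : A j),
      (pairMarg P i j a b - marg P i a * marg P j b) ^ m /
        (marg P i a * marg P j b) ^ (m - 1)
      = ∑ xs : Fin m → (∀ i, A i),
          (∏ k, P (xs k)) * ((∏ k, cent P i a (xs k)) / (marg P i a) ^ (m - 1))
            * ((∏ k, cent P j b (xs k)) / (marg P j b) ^ (m - 1)) := by
    intro a b
    rw [pm_sub P hP i j a b, sum_pow, Finset.sum_div]
    refine Finset.sum_congr rfl fun xs _ => ?_
    rw [show (∏ k, P (xs k) * (cent P i a (xs k) * cent P j b (xs k)))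
        = (∏ k, P (xs k)) * ((∏ k, cent P i a (xs k)) * (∏ k, cent P j b (xs k))) by
      rw [← Finset.prod_mul_distrib, ← Finset.prod_mul_distrib]]
    rw [mul_pow]
    ring
  simp only [step1]
  rw [show (∑ a : A i, ∑ b : A j, ∑ xs : Fin m → (∀ i, A i),
        (∏ k, P (xs k)) * ((∏ k, cent P i a (xs k)) / (marg P i a) ^ (m - 1))
          * ((∏ k, cent P j b (xs k)) / (marg P j b) ^ (m - 1)))
      = ∑ xs : Fin m → (∀ i, A i), ∑ a : A i, ∑ b : A j,
        (∏ k, P (xs k)) * ((∏ k, cent P i a (xs k)) / (marg P i a) ^ (m - 1))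
          * ((∏ k, cent P j b (xs k)) / (marg P j b) ^ (m - 1)) by
    exact (Finset.sum_congr rfl fun a _ => Finset.sum_comm).trans Finset.sum_comm]
  refine Finset.sum_congr rfl fun xs _ => ?_
  simp only [uu, Finset.mul_sum, Finset.sum_mul]
  refine Finset.sum_comm.trans ?_
  refine Finset.sum_congr rfl fun a _ => Finset.sum_congr rfl fun b _ => ?_
  ring

end Stmt3Aux

/-- For the monomial generator `f_m(t) = (t-1)^m`, `m ≥ 2`, the matrix
`M^{(m)}_{ij} = ∑_{a,b} (p_{ij}(a,b) - p_i(a) p_j(b))^m / (p_i(a) p_j(b))^{m-1}`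
is positive semidefinite. -/
theorem stmt_3 (m : ℕ) (hm : 2 ≤ m)
    (n : ℕ) (A : Fin n → Type) [∀ i, Fintype (A i)] (P : (∀ i, A i) → ℝ)
    (hP : IsJointPMF P) (hpos : PosMarg P) :
    (Matrix.of fun i j : Fin n =>
        ∑ a, ∑ b,
          (pairMarg P i j a b - marg P i a * marg P j b) ^ m /
            (marg P i a * marg P j b) ^ (m - 1)).PosSemidef := by
  have hrep := Stmt3Aux.rep (A := A) m P hP
  rw [Matrix.posSemidef_iff_dotProduct_mulVec]
  constructor
  · ext i j
    simp only [Matrix.conjTranspose_apply, Matrix.of_apply, star_trivial]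
    rw [hrep j i, hrep i j]
    exact Finset.sum_congr rfl fun xs _ => by ring
  · intro v
    have key : dotProduct (star v) ((Matrix.of fun i j : Fin n =>
        ∑ a, ∑ b,
          (pairMarg P i j a b - marg P i a * marg P j b) ^ m /
            (marg P i a * marg P j b) ^ (m - 1)).mulVec v)
        = ∑ xs : Fin m → (∀ i, A i),
            (∏ k, P (xs k)) * (∑ i, v i * Stmt3Aux.uu P m i xs) ^ 2 := by
      simp only [dotProduct, Matrix.mulVec, Matrix.of_apply, hrep, star_trivial,
        Pi.star_apply]
      rw [show (∑ i : Fin n, v i * ∑ j : Fin n,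
            (∑ xs : Fin m → (∀ i, A i),
              (∏ k, P (xs k)) * Stmt3Aux.uu P m i xs * Stmt3Aux.uu P m j xs) * v j)
          = ∑ xs : Fin m → (∀ i, A i), ∑ i : Fin n, ∑ j : Fin n,
              v i * (((∏ k, P (xs k)) * Stmt3Aux.uu P m i xs * Stmt3Aux.uu P m j xs) * v j) by
        rw [Finset.sum_comm]
        refine Finset.sum_congr rfl fun i _ => ?_
        rw [Finset.mul_sum]
        simp only [Finset.sum_mul, Finset.mul_sum]
        rw [Finset.sum_comm]]
      refine Finset.sum_congr rfl fun xs _ => ?_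
      rw [sq, Finset.sum_mul_sum, Finset.mul_sum]
      refine Finset.sum_congr rfl fun i _ => ?_
      rw [Finset.mul_sum]
      exact Finset.sum_congr rfl fun j _ => by ring
    rw [key]
    refine Finset.sum_nonneg fun xs _ => mul_nonneg ?_ (sq_nonneg _)
    exact Finset.prod_nonneg fun k _ => hP.1 _
end
end

section
/- Let K be a symmetric real n×n matrix and Δ a positive semidefinite diagonal real n×n matrix. If for every R ∈ ℕ, R ≥ 1, the (Rn)×(Rn) block matrix B_R = J_R ⊗ K + I_R ⊗ Δ is positive semidefinite, where J_R is the R×R all-ones matrix and ⊗ is the Kronecker product, then K is positive semidefinite. -/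
open Kronecker Matrix

/-- (Replica forcing.) Let `K` be symmetric and `Δ` a PSD diagonal matrix.
If `B_R = J_R ⊗ K + I_R ⊗ Δ` is PSD for every `R ≥ 1` (`J_R` the all-ones matrix), then
`K` is PSD. -/
theorem stmt_6 (n : ℕ) (K Δ : Matrix (Fin n) (Fin n) ℝ)
    (hK : K.IsSymm) (hΔdiag : Δ.IsDiag) (hΔ : Δ.PosSemidef)
    (h : ∀ R : ℕ, 1 ≤ R →
      ((Matrix.of fun _ _ => (1 : ℝ) : Matrix (Fin R) (Fin R) ℝ) ⊗ₖ K +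
        (1 : Matrix (Fin R) (Fin R) ℝ) ⊗ₖ Δ).PosSemidef) :
    K.PosSemidef := by
  rw [Matrix.posSemidef_iff_dotProduct_mulVec]
  constructor
  · rw [Matrix.IsHermitian]
    ext i j
    simpa using congrFun (congrFun hK i) j
  intro x
  set c : ℝ := star x ⬝ᵥ K.mulVec x with hc
  set d : ℝ := star x ⬝ᵥ Δ.mulVec x with hd
  have hd0 : 0 ≤ d := hΔ.dotProduct_mulVec_nonneg x
  have key : ∀ R : ℕ, 1 ≤ R → 0 ≤ (R:ℝ)^2 * c + (R:ℝ) * d := by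
    intro R hR
    have hq := (h R hR).dotProduct_mulVec_nonneg (fun p : Fin R × Fin n => x p.2)
    have e : (star (fun p : Fin R × Fin n => x p.2)) ⬝ᵥ
        (((Matrix.of fun _ _ => (1 : ℝ) : Matrix (Fin R) (Fin R) ℝ) ⊗ₖ K +
        (1 : Matrix (Fin R) (Fin R) ℝ) ⊗ₖ Δ).mulVec (fun p : Fin R × Fin n => x p.2))
        = (R:ℝ)^2 * c + (R:ℝ) * d := by
      simp only [dotProduct, Matrix.mulVec, Matrix.add_apply, Matrix.kroneckerMap_apply,
        Matrix.of_apply, Matrix.one_apply, Pi.star_apply, star_trivial, hc, hd,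
        Fintype.sum_prod_type]
      push_cast
      simp only [mul_add, Finset.sum_add_distrib, Finset.mul_sum, Finset.sum_ite_eq',
        Finset.mem_univ, if_true, one_mul, mul_ite, mul_zero, mul_one]
      rw [Finset.sum_comm]
      simp only [mul_add, add_mul, mul_ite, ite_mul, mul_one, mul_zero, one_mul, zero_mul,
        Finset.sum_add_distrib, Finset.sum_ite_eq, Finset.mem_univ, if_true,
        Finset.sum_const, Finset.card_univ, Fintype.card_fin, nsmul_eq_mul]
      have key2 : ∀ (x_2 : Fin R) (f : Fin n → ℝ),
          (∑ x_3 : Fin R, ∑ x_4 : Fin n, (if x_2 = x_3 then f x_4 else 0)) = ∑ x_4, f x_4 := by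
        intro x_2 f
        rw [Finset.sum_comm]
        simp [Finset.sum_ite_eq]
      simp only [key2, Finset.sum_const, Finset.card_univ, Fintype.card_fin, nsmul_eq_mul,
        Finset.mul_sum]
      push_cast
      ring_nf
    rw [e] at hq
    exact hq
  by_contra hcneg
  push_neg at hcneg
  obtain ⟨R, hR⟩ := exists_nat_gt (d / (-c))
  have hR1 : 1 ≤ R := by
    by_contra hh
    interval_cases R
    · have h0 : 0 ≤ d / (-c) := div_nonneg hd0 (by linarith)
      simp only [Nat.cast_zero] at hR
      linarith
  have := key R hR1
  have hRpos : (0:ℝ) < R := by exact_mod_cast hR1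
  have : (R:ℝ) * (-c) > d := by
    rw [div_lt_iff₀ (by linarith)] at hR
    linarith
  nlinarith [key R hR1]
end

section
/- Let k ≥ 1 be an integer, a ∈ (−1,1), and u, v ∈ ℝ^k with |a| + ‖u‖_∞ ≤ 1 and |a| + ‖v‖_∞ ≤ 1. Define, for y₁, y₂ ∈ {−1,+1}, p(y₁,y₂) := (1/(2k)) ∑_{s∈{−1,+1}} ∑_{j=1}^k (1/4)(1 + y₁(a + s·u_j))(1 + y₂(a + s·v_j)). Then p is a probability mass function on {−1,+1}², its marginals are p₁(y) = p₂(y) = (1/2)(1 + a·y), and p(y₁,y₂) = (1/4)(1 + a(y₁+y₂) + (a² + ρ)·y₁y₂) where ρ := ⟨u,v⟩/k; consequently, p(y₁,y₂)/(p₁(y₁)p₂(y₂)) = 1 + ρ·y₁y₂/((1 + a·y₁)(1 + a·y₂)). -/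
open scoped Classical

lemma stmt8_closed (k : ℕ) (hk : 1 ≤ k) (a : ℝ) (u v : Fin k → ℝ) (y₁ y₂ : ℝ) :
    (1 / (2 * (k:ℝ))) * ∑ s ∈ ({-1, 1} : Finset ℝ), ∑ j : Fin k,
        (1 / 4) * (1 + y₁ * (a + s * u j)) * (1 + y₂ * (a + s * v j))
      = (1 / 4) * (1 + a * (y₁ + y₂) + (a ^ 2 + (∑ j, u j * v j) / k) * (y₁ * y₂)) := by
  have hk0 : (k : ℝ) ≠ 0 := by positivity
  rw [Finset.sum_pair (by norm_num : (-1 : ℝ) ≠ 1), ← Finset.sum_add_distrib]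
  have : ∀ j : Fin k,
      (1 / 4) * (1 + y₁ * (a + (-1) * u j)) * (1 + y₂ * (a + (-1) * v j)) +
        (1 / 4) * (1 + y₁ * (a + 1 * u j)) * (1 + y₂ * (a + 1 * v j))
      = (1 / 2) * (1 + a * (y₁ + y₂) + a ^ 2 * (y₁ * y₂))
        + ((1 / 2) * (y₁ * y₂)) * (u j * v j) := by
    intro j; ring
  rw [Finset.sum_congr rfl (fun j _ => this j), Finset.sum_add_distrib,
    Finset.sum_const, ← Finset.mul_sum, Finset.card_univ, Fintype.card_fin, nsmul_eq_mul]
  field_simp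
  ring

lemma stmt8_ratio (b c r : ℝ) (hb : b ≠ 0) (hc : c ≠ 0) :
    (1 / 4) * (b * c + r) / ((1 / 2) * b * ((1 / 2) * c)) = 1 + r / (b * c) := by
  field_simp
  ring

lemma stmt8_factor_nonneg (a c y : ℝ) (hc : |a + c| ≤ 1) (hy : y = -1 ∨ y = 1) :
    0 ≤ 1 + y * (a + c) := by
  rw [abs_le] at hc
  rcases hy with h | h <;> subst h <;> nlinarith [hc.1, hc.2]

/-- The biased one-hot latent model: for `a ∈ (-1,1)` and admissible
loadings `u, v ∈ ℝ^k`, the law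
`p(y₁,y₂) = (1/(2k)) ∑_{s=±1} ∑_j (1/4)(1 + y₁(a + s u_j))(1 + y₂(a + s v_j))`
is a pmf on `{-1,+1}²` with marginals `(1/2)(1 + a·y)`, closed form
`p(y₁,y₂) = (1/4)(1 + a(y₁+y₂) + (a² + ρ) y₁ y₂)` where `ρ = ⟨u,v⟩/k`, and
joint-to-product ratio `1 + ρ y₁y₂ / ((1 + a y₁)(1 + a y₂))`. -/
theorem stmt_8 (k : ℕ) (hk : 1 ≤ k) (a : ℝ) (ha : a ∈ Set.Ioo (-1 : ℝ) 1)
    (u v : Fin k → ℝ) (hu : |a| + ⨆ j, |u j| ≤ 1) (hv : |a| + ⨆ j, |v j| ≤ 1) :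
    let p : ℝ → ℝ → ℝ := fun y₁ y₂ =>
      (1 / (2 * k)) * ∑ s ∈ ({-1, 1} : Finset ℝ), ∑ j : Fin k,
        (1 / 4) * (1 + y₁ * (a + s * u j)) * (1 + y₂ * (a + s * v j))
    let ρ : ℝ := (∑ j, u j * v j) / k
    (∀ y₁ ∈ ({-1, 1} : Finset ℝ), ∀ y₂ ∈ ({-1, 1} : Finset ℝ), 0 ≤ p y₁ y₂) ∧
    (∑ y₁ ∈ ({-1, 1} : Finset ℝ), ∑ y₂ ∈ ({-1, 1} : Finset ℝ), p y₁ y₂) = 1 ∧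
    (∀ y ∈ ({-1, 1} : Finset ℝ),
      ∑ y₂ ∈ ({-1, 1} : Finset ℝ), p y y₂ = (1 / 2) * (1 + a * y)) ∧
    (∀ y ∈ ({-1, 1} : Finset ℝ),
      ∑ y₁ ∈ ({-1, 1} : Finset ℝ), p y₁ y = (1 / 2) * (1 + a * y)) ∧
    (∀ y₁ ∈ ({-1, 1} : Finset ℝ), ∀ y₂ ∈ ({-1, 1} : Finset ℝ),
      p y₁ y₂ = (1 / 4) * (1 + a * (y₁ + y₂) + (a ^ 2 + ρ) * (y₁ * y₂))) ∧
    (∀ y₁ ∈ ({-1, 1} : Finset ℝ), ∀ y₂ ∈ ({-1, 1} : Finset ℝ),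
      p y₁ y₂ / ((1 / 2) * (1 + a * y₁) * ((1 / 2) * (1 + a * y₂)))
        = 1 + ρ * (y₁ * y₂) / ((1 + a * y₁) * (1 + a * y₂))) := by
  intro p ρ
  obtain ⟨ha1, ha2⟩ := ha
  have hclosed : ∀ y₁ y₂ : ℝ,
      p y₁ y₂ = (1 / 4) * (1 + a * (y₁ + y₂) + (a ^ 2 + ρ) * (y₁ * y₂)) :=
    fun y₁ y₂ => stmt8_closed k hk a u v y₁ y₂
  have hmem : ∀ y : ℝ, y ∈ ({-1, 1} : Finset ℝ) → y = -1 ∨ y = 1 := by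
    intro y hy; simpa using hy
  refine ⟨?_, ?_, ?_, ?_, ?_, ?_⟩
  · -- nonnegativity
    intro y₁ hy₁ y₂ hy₂
    have h1 := hmem _ hy₁
    have h2 := hmem _ hy₂
    apply mul_nonneg (by positivity)
    apply Finset.sum_nonneg
    intro s hs
    apply Finset.sum_nonneg
    intro j _
    have hs' : s = -1 ∨ s = 1 := by simpa using hs
    have habs : ∀ (w : Fin k → ℝ), |a| + ⨆ i, |w i| ≤ 1 → |a + s * w j| ≤ 1 := by
      intro w hw
      have hj : |w j| ≤ ⨆ i, |w i| :=
        le_ciSup (f := fun i => |w i|) (Set.Finite.bddAbove (Set.finite_range _)) j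
      have : |a + s * w j| ≤ |a| + |s * w j| := abs_add_le _ _
      have hsw : |s * w j| = |w j| := by
        rcases hs' with h | h <;> subst h <;> simp [abs_mul]
      linarith
    have hA := stmt8_factor_nonneg a (s * u j) y₁ (habs u hu) h1
    have hB := stmt8_factor_nonneg a (s * v j) y₂ (habs v hv) h2
    positivity
  · -- sums to 1
    rw [Finset.sum_pair (by norm_num : (-1 : ℝ) ≠ 1),
      Finset.sum_pair (by norm_num : (-1 : ℝ) ≠ 1),
      Finset.sum_pair (by norm_num : (-1 : ℝ) ≠ 1)]
    rw [hclosed, hclosed, hclosed, hclosed]; ring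
  · intro y hy
    rw [Finset.sum_pair (by norm_num : (-1 : ℝ) ≠ 1)]
    rw [hclosed, hclosed]; ring
  · intro y hy
    rw [Finset.sum_pair (by norm_num : (-1 : ℝ) ≠ 1)]
    rw [hclosed, hclosed]; ring
  · intro y₁ _ y₂ _; exact hclosed y₁ y₂
  · intro y₁ hy₁ y₂ hy₂
    have h1 := hmem _ hy₁
    have h2 := hmem _ hy₂
    have hp : (1 : ℝ) + a ≠ 0 := by linarith
    have hm : (1 : ℝ) - a ≠ 0 := by linarith
    have hb : 1 + a * y₁ ≠ 0 := by rcases h1 with h | h <;> subst h <;>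
      [ (simpa [sub_eq_add_neg] using hm); (simpa [mul_comm] using hp) ]
    have hc : 1 + a * y₂ ≠ 0 := by rcases h2 with h | h <;> subst h <;>
      [ (simpa [sub_eq_add_neg] using hm); (simpa [mul_comm] using hp) ]
    rw [hclosed]
    rw [show (1 / 4 : ℝ) * (1 + a * (y₁ + y₂) + (a ^ 2 + ρ) * (y₁ * y₂))
        = (1 / 4) * ((1 + a * y₁) * (1 + a * y₂) + ρ * (y₁ * y₂)) by ring]
    rw [stmt8_ratio _ _ _ hb hc]
end

section
/- Fix a ∈ (0,1) and let H : ℝ → ℝ. Suppose that for every k ≥ 1 and every finite family u₁,…,uₙ ∈ ℝ^k with |a| + ‖u_i‖_∞ ≤ 1 for all i, the matrix [H(⟨u_i,u_j⟩)]_{i,j} is positive semidefinite. Then with ρ := (1−a)², for every dimension d and every finite set of vectors v₁,…,vₙ ∈ ℝ^d satisfying |⟨v_i,v_j⟩| < ρ for all i, j, the matrix [H(⟨v_i,v_j⟩)]_{i,j} is positive semidefinite. -/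
/-- (Admissibility realizes small Gram sets.) Fix `a ∈ (0,1)`. If the
kernel matrix `[H(⟨u_i,u_j⟩)]` is PSD for every latent dimension `k ≥ 1` and every
admissible family (`|a| + ‖u_i‖_∞ ≤ 1`), then with `ρ = (1-a)²`, for every dimension `d`
and all vectors `v₁,…,vₙ` with `|⟨v_i,v_j⟩| < ρ`, the matrix `[H(⟨v_i,v_j⟩)]` is PSD. -/
theorem stmt_11 (a : ℝ) (ha : a ∈ Set.Ioo (0 : ℝ) 1) (H : ℝ → ℝ)
    (hyp : ∀ (k : ℕ), 1 ≤ k → ∀ (n : ℕ) (u : Fin n → Fin k → ℝ),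
      (∀ i, |a| + ⨆ j, |u i j| ≤ 1) →
      (Matrix.of fun i i' : Fin n => H (∑ j, u i j * u i' j)).PosSemidef) :
    ∀ (d n : ℕ) (v : Fin n → Fin d → ℝ),
      (∀ i i' : Fin n, |∑ j, v i j * v i' j| < (1 - a) ^ 2) →
      (Matrix.of fun i i' : Fin n => H (∑ j, v i j * v i' j)).PosSemidef := by
  obtain ⟨ha0, ha1⟩ := ha
  intro d n v hv
  rcases Nat.eq_zero_or_pos d with hd | hd
  · subst hd
    have h0 : ∀ i i' : Fin n, (∑ j : Fin 0, v i j * v i' j) = 0 := by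
      intro i i'; simp
    have := hyp 1 le_rfl n (fun _ _ => 0) (by
      intro i
      simp [abs_of_pos ha0]
      linarith)
    convert this using 2 with i i'
    simp [h0]
  · have key := hyp d hd n v ?_
    · exact key
    · intro i
      rw [abs_of_pos ha0]
      have hbound : ∀ j, |v i j| ≤ 1 - a := by
        intro j
        have hvv := hv i i
        have hsum : v i j * v i j ≤ ∑ k, v i k * v i k :=
          Finset.single_le_sum (f := fun k => v i k * v i k)
            (fun k _ => mul_self_nonneg _) (Finset.mem_univ j)
        have habs : |∑ k, v i k * v i k| = ∑ k, v i k * v i k := by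
          rw [abs_of_nonneg (Finset.sum_nonneg fun k _ => mul_self_nonneg _)]
        rw [habs] at hvv
        nlinarith [abs_nonneg (v i j), sq_abs (v i j)]
      have hne : Nonempty (Fin d) := ⟨⟨0, hd⟩⟩
      have : (⨆ j, |v i j|) ≤ 1 - a := ciSup_le hbound
      linarith
end

section
/- Let f : ℝ → ℝ be analytic at 1, with f(1+u) = ∑_{m≥0} (f^(m)(1)/m!) u^m for |u| < r. Fix a ∈ (0,1) and define H_a(z) := ((1+a)²/4)·f(1 + z/(1+a)²) + ((1−a)²/4)·f(1 + z/(1−a)²) + ((1−a²)/2)·f(1 − z/(1−a²)). Then for |z| sufficiently small, H_a(z) = ∑_{m≥0} d_m(a) z^m with d_m(a) = T_m(a)·f^(m)(1)/m!, where T_m(a) := (1/4)[(1+a)^{2−2m} + (1−a)^{2−2m}] − (1/2)(a²−1)^{1−m}; in particular, if f(1) = 0 then d₀(a) = 0, and d₁(a) = 0 since T₁(a) = 0. -/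
/-- (Coefficient identification.) If `f` is analytic at `1` with
`f(1+u) = ∑_m (f^{(m)}(1)/m!) u^m` for `|u| < r`, then for `|z|` small
`H_a(z) = ∑_m d_m(a) z^m` with `d_m(a) = T_m(a) f^{(m)}(1)/m!`, where
`T_m(a) = (1/4)[(1+a)^{2-2m} + (1-a)^{2-2m}] - (1/2)(a²-1)^{1-m}`; in particular
`f(1) = 0` gives `d₀(a) = 0`, and `T₁(a) = 0` gives `d₁(a) = 0`. -/
theorem stmt_12 (f : ℝ → ℝ) (hA : AnalyticAt ℝ f 1) (r : ℝ) (hr : 0 < r)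
    (hser : ∀ u : ℝ, |u| < r →
      HasSum (fun m : ℕ => iteratedDeriv m f 1 / (Nat.factorial m) * u ^ m) (f (1 + u)))
    (a : ℝ) (ha : a ∈ Set.Ioo (0 : ℝ) 1) :
    let T : ℕ → ℝ := fun m =>
      (1 / 4) * ((1 + a) ^ ((2 : ℤ) - 2 * (m : ℤ)) + (1 - a) ^ ((2 : ℤ) - 2 * (m : ℤ)))
        - (1 / 2) * (a ^ 2 - 1) ^ ((1 : ℤ) - (m : ℤ))
    let d : ℕ → ℝ := fun m => T m * iteratedDeriv m f 1 / (Nat.factorial m)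
    let Ha : ℝ → ℝ := fun z =>
      ((1 + a) ^ 2 / 4) * f (1 + z / (1 + a) ^ 2)
        + ((1 - a) ^ 2 / 4) * f (1 + z / (1 - a) ^ 2)
        + ((1 - a ^ 2) / 2) * f (1 - z / (1 - a ^ 2))
    (∃ ε > (0 : ℝ), ∀ z : ℝ, |z| < ε →
        HasSum (fun m : ℕ => d m * z ^ m) (Ha z)) ∧
    (f 1 = 0 → d 0 = 0) ∧ T 1 = 0 ∧ d 1 = 0 := by
  obtain ⟨ha0, ha1⟩ := ha
  intro T d Ha
  have hp : (0:ℝ) < 1 + a := by linarith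
  have hq : (0:ℝ) < 1 - a := by linarith
  have hs : (0:ℝ) < 1 - a ^ 2 := by nlinarith
  have hpne : (1 + a) ≠ 0 := ne_of_gt hp
  have hqne : (1 - a) ≠ 0 := ne_of_gt hq
  have hsne : (1 - a ^ 2) ≠ 0 := ne_of_gt hs
  have hsne' : (a ^ 2 - 1) ≠ 0 := by intro h; apply hsne; linarith
  -- zpow lemmas
  have hTz : ∀ m : ℕ, T m =
      ((1 + a) ^ 2 / 4) * (1 / (1 + a) ^ 2) ^ m
        + ((1 - a) ^ 2 / 4) * (1 / (1 - a) ^ 2) ^ m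
        + ((1 - a ^ 2) / 2) * (-(1 / (1 - a ^ 2))) ^ m := by
    intro m
    have e1 : (1 + a) ^ ((2 : ℤ) - 2 * (m : ℤ)) = (1 + a) ^ 2 * (1 / (1 + a) ^ 2) ^ m := by
      rw [zpow_sub₀ hpne,
        show ((2:ℤ) * m) = ((2 * m : ℕ) : ℤ) by push_cast; ring, zpow_natCast,
        show ((2:ℤ)) = ((2:ℕ) : ℤ) by norm_num, zpow_natCast,
        one_div, inv_pow, ← pow_mul, div_eq_mul_inv]
    have e2 : (1 - a) ^ ((2 : ℤ) - 2 * (m : ℤ)) = (1 - a) ^ 2 * (1 / (1 - a) ^ 2) ^ m := by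
      rw [zpow_sub₀ hqne,
        show ((2:ℤ) * m) = ((2 * m : ℕ) : ℤ) by push_cast; ring, zpow_natCast,
        show ((2:ℤ)) = ((2:ℕ) : ℤ) by norm_num, zpow_natCast,
        one_div, inv_pow, ← pow_mul, div_eq_mul_inv]
    have e3 : (a ^ 2 - 1) ^ ((1 : ℤ) - (m : ℤ)) =
        -((1 - a ^ 2) * (-(1 / (1 - a ^ 2))) ^ m) := by
      rw [zpow_sub₀ hsne', zpow_one, zpow_natCast,
        show (-(1 / (1 - a ^ 2))) = (-1) / (1 - a ^ 2) by ring, div_pow,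
        show (a ^ 2 - 1) ^ m = ((-1 : ℝ)) ^ m * (1 - a ^ 2) ^ m by
          rw [show (a ^ 2 - 1) = (-1) * (1 - a ^ 2) by ring, mul_pow]]
      rcases Nat.even_or_odd m with h | h
      · rw [h.neg_one_pow]
        field_simp
        ring
      · rw [h.neg_one_pow]
        field_simp
        ring
    simp only [T, e1, e2, e3]
    ring
  refine ⟨⟨r * (1 - a) ^ 2, by positivity, fun z hz => ?_⟩, ?_, ?_, ?_⟩
  · have hq2 : (0:ℝ) < (1 - a) ^ 2 := by positivity
    have hzb1 : |z / (1 + a) ^ 2| < r := by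
      rw [abs_div, abs_of_pos (by positivity : (0:ℝ) < (1 + a) ^ 2), div_lt_iff₀ (by positivity)]
      have : (1 - a) ^ 2 ≤ (1 + a) ^ 2 := by nlinarith
      calc |z| < r * (1 - a) ^ 2 := hz
        _ ≤ r * (1 + a) ^ 2 := by nlinarith
    have hzb2 : |z / (1 - a) ^ 2| < r := by
      rw [abs_div, abs_of_pos hq2, div_lt_iff₀ hq2]; exact hz
    have hzb3 : |(-(z / (1 - a ^ 2)))| < r := by
      rw [abs_neg, abs_div, abs_of_pos hs, div_lt_iff₀ hs]
      have : (1 - a) ^ 2 ≤ 1 - a ^ 2 := by nlinarith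
      calc |z| < r * (1 - a) ^ 2 := hz
        _ ≤ r * (1 - a ^ 2) := by nlinarith
    have h1 := (hser _ hzb1).mul_left ((1 + a) ^ 2 / 4)
    have h2 := (hser _ hzb2).mul_left ((1 - a) ^ 2 / 4)
    have h3 := (hser _ hzb3).mul_left ((1 - a ^ 2) / 2)
    rw [show (1 + -(z / (1 - a ^ 2))) = 1 - z / (1 - a ^ 2) by ring] at h3
    have hsum := (h1.add h2).add h3
    have hfun : (fun m : ℕ => d m * z ^ m) = fun m : ℕ =>
        (1 + a) ^ 2 / 4 * (iteratedDeriv m f 1 / (Nat.factorial m) * (z / (1 + a) ^ 2) ^ m)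
          + (1 - a) ^ 2 / 4 * (iteratedDeriv m f 1 / (Nat.factorial m) * (z / (1 - a) ^ 2) ^ m)
          + (1 - a ^ 2) / 2 * (iteratedDeriv m f 1 / (Nat.factorial m) * (-(z / (1 - a ^ 2))) ^ m) := by
      funext m
      have hm : ((Nat.factorial m : ℝ)) ≠ 0 := by positivity
      simp only [d, hTz m]
      rw [show (-(z / (1 - a ^ 2))) = (-1) * (z / (1 - a ^ 2)) by ring,
        show (-(1 / (1 - a ^ 2))) = (-1) * (1 / (1 - a ^ 2)) by ring,
        mul_pow, mul_pow, div_pow, div_pow, div_pow, one_pow]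
      ring
    rw [hfun]
    exact hsum
  · intro hf0
    simp [d, T, iteratedDeriv_zero, hf0]
  · simp only [T]
    norm_num
  · simp only [d, T]
    norm_num
end

section
/- Let s = √2/2 and let K be the real 4×4 matrix (1/9)·[[1, s, 0, s], [s, 1, s, 0], [0, s, 1, s], [s, 0, s, 1]], and let Δ = (1/3)·I₄. Then: (i) K is not positive semidefinite (indeed for v = (1,−1,1,−1), vᵀKv = 4(1−√2)/9 < 0); (ii) Δ and R·K + Δ are positive semidefinite for every integer 1 ≤ R ≤ 7; and (iii) for every integer R ≥ 8, the matrix R·K + Δ is not positive semidefinite, hence the block matrix B_R = J_R ⊗ K + I_R ⊗ Δ is not positive semidefinite. -/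
open Kronecker Matrix

namespace Stmt15Aux

noncomputable def sv : ℝ := Real.sqrt 2 / 2

noncomputable def Km : Matrix (Fin 4) (Fin 4) ℝ :=
  (1 / 9 : ℝ) • Matrix.of ![![1, sv, 0, sv], ![sv, 1, sv, 0], ![0, sv, 1, sv], ![sv, 0, sv, 1]]

noncomputable def Dm : Matrix (Fin 4) (Fin 4) ℝ := (1 / 3 : ℝ) • 1

def vv : Fin 4 → ℝ := ![1, -1, 1, -1]

lemma hs0 : 0 ≤ sv := by unfold sv; positivity

lemma hs2 : sv ^ 2 = 1 / 2 := by
  have : (Real.sqrt 2) ^ 2 = 2 := Real.sq_sqrt (by norm_num)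
  simp [sv]; nlinarith

lemma hs57 : sv ≤ 5 / 7 := by nlinarith [hs2, hs0]

lemma quadK (x : Fin 4 → ℝ) : x ⬝ᵥ Km *ᵥ x =
    (1 / 9) * (x 0 ^ 2 + x 1 ^ 2 + x 2 ^ 2 + x 3 ^ 2
      + 2 * sv * ((x 0 + x 2) * (x 1 + x 3))) := by
  simp [Km, Matrix.mulVec, dotProduct, Fin.sum_univ_four]; ring

lemma quadD (x : Fin 4 → ℝ) : x ⬝ᵥ Dm *ᵥ x =
    (1 / 3) * (x 0 ^ 2 + x 1 ^ 2 + x 2 ^ 2 + x 3 ^ 2) := by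
  simp [Dm, Matrix.mulVec, dotProduct, Fin.sum_univ_four, Matrix.one_apply]; ring

lemma hermK : Km.IsHermitian := by
  ext i j; fin_cases i <;> fin_cases j <;> simp [Km, Matrix.conjTranspose_apply]

lemma hermD : Dm.IsHermitian := by
  ext i j; fin_cases i <;> fin_cases j <;> simp [Dm, Matrix.conjTranspose_apply, Matrix.one_apply]

lemma psdD : Dm.PosSemidef := by
  refine Matrix.PosSemidef.of_dotProduct_mulVec_nonneg hermD fun x => ?_
  rw [show star x = x from star_trivial x, quadD]
  positivity

lemma psdRK (R : ℕ) (hR : R ≤ 7) : ((R : ℝ) • Km + Dm).PosSemidef := by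
  have herm : ((R : ℝ) • Km + Dm).IsHermitian := by
    ext i j
    fin_cases i <;> fin_cases j <;>
      simp [Km, Dm, Matrix.conjTranspose_apply, Matrix.one_apply]
  refine Matrix.PosSemidef.of_dotProduct_mulVec_nonneg herm fun x => ?_
  rw [show star x = x from star_trivial x, Matrix.add_mulVec, Matrix.smul_mulVec,
    dotProduct_add, dotProduct_smul, quadK, quadD, smul_eq_mul]
  have hR' : (R : ℝ) ≤ 7 := by exact_mod_cast hR
  have hR0 : (0 : ℝ) ≤ R := Nat.cast_nonneg R
  have h1 := mul_nonneg (mul_nonneg hR0 hs0) (sq_nonneg (x 0 + x 2 + x 1 + x 3))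
  have h2 := mul_nonneg (mul_nonneg hR0 (by nlinarith [hs57] : (0:ℝ) ≤ 5/7 - sv))
    (sq_nonneg (x 0 + x 2) )
  have h3 := mul_nonneg (mul_nonneg hR0 (by nlinarith [hs57] : (0:ℝ) ≤ 5/7 - sv))
    (sq_nonneg (x 1 + x 3))
  have h4 := mul_nonneg (by linarith : (0:ℝ) ≤ 7 - R) (sq_nonneg (x 0 + x 2))
  have h5 := mul_nonneg (by linarith : (0:ℝ) ≤ 7 - R) (sq_nonneg (x 1 + x 3))
  nlinarith [sq_nonneg (x 0 - x 2), sq_nonneg (x 1 - x 3), hR0,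
    mul_nonneg hR0 (sq_nonneg (x 0 - x 2)), mul_nonneg hR0 (sq_nonneg (x 1 - x 3))]

lemma quadKv : vv ⬝ᵥ Km *ᵥ vv = 4 * (1 - Real.sqrt 2) / 9 := by
  rw [quadK]; simp [vv, sv]; ring

lemma quadDv : vv ⬝ᵥ Dm *ᵥ vv = 4 / 3 := by
  rw [quadD]; norm_num [vv, Matrix.cons_val_two, Matrix.cons_val_three]

lemma sqrt2_gt : (11:ℝ)/8 < Real.sqrt 2 := by
  nlinarith [Real.sq_sqrt (by norm_num : (2:ℝ) ≥ 0), Real.sqrt_nonneg 2]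

lemma quadKv_neg : 4 * (1 - Real.sqrt 2) / 9 < 0 := by nlinarith [sqrt2_gt]

lemma notPsdK : ¬ Km.PosSemidef := by
  intro h
  have := h.dotProduct_mulVec_nonneg vv
  rw [show star vv = vv from star_trivial vv, quadKv] at this
  linarith [quadKv_neg]

lemma notPsdRK (R : ℕ) (hR : 8 ≤ R) : ¬ ((R : ℝ) • Km + Dm).PosSemidef := by
  intro h
  have := h.dotProduct_mulVec_nonneg vv
  rw [show star vv = vv from star_trivial vv, Matrix.add_mulVec, Matrix.smul_mulVec,
    dotProduct_add, dotProduct_smul, quadKv, quadD, smul_eq_mul] at this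
  have hR' : (8 : ℝ) ≤ R := by exact_mod_cast hR
  simp [vv] at this
  nlinarith [sqrt2_gt]

lemma quadB (R : ℕ) (w : Fin R × Fin 4 → ℝ) (hw : w = fun p => vv p.2) :
    w ⬝ᵥ (((Matrix.of fun _ _ => (1 : ℝ) : Matrix (Fin R) (Fin R) ℝ) ⊗ₖ Km +
      (1 : Matrix (Fin R) (Fin R) ℝ) ⊗ₖ Dm) *ᵥ w)
    = (R:ℝ)^2 * (vv ⬝ᵥ Km *ᵥ vv) + (R:ℝ) * (vv ⬝ᵥ Dm *ᵥ vv) := by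
  subst hw
  have hBw : (((Matrix.of fun _ _ => (1 : ℝ) : Matrix (Fin R) (Fin R) ℝ) ⊗ₖ Km +
      (1 : Matrix (Fin R) (Fin R) ℝ) ⊗ₖ Dm) *ᵥ fun p => vv p.2)
      = fun p : Fin R × Fin 4 => (R:ℝ) * (Km *ᵥ vv) p.2 + (Dm *ᵥ vv) p.2 := by
    funext p
    obtain ⟨i, a⟩ := p
    simp only [Matrix.mulVec, dotProduct, Fintype.sum_prod_type, Matrix.add_apply,
      Matrix.kroneckerMap_apply, Matrix.of_apply, Matrix.one_apply, one_mul, add_mul,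
      Finset.sum_add_distrib, ite_mul, zero_mul, Finset.sum_ite_irrel, Finset.sum_const_zero,
      Finset.sum_ite_eq, Finset.mem_univ, if_true, Finset.sum_const, Finset.card_univ,
      Fintype.card_fin, nsmul_eq_mul]
  rw [hBw]
  simp only [dotProduct, Matrix.mulVec, Fintype.sum_prod_type, mul_add,
    Finset.sum_add_distrib, Finset.sum_const, Finset.card_univ, Fintype.card_fin,
    nsmul_eq_mul, Finset.mul_sum]
  ring_nf

lemma notPsdB (R : ℕ) (hR : 8 ≤ R) :
    ¬ ((Matrix.of fun _ _ => (1 : ℝ) : Matrix (Fin R) (Fin R) ℝ) ⊗ₖ Km +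
        (1 : Matrix (Fin R) (Fin R) ℝ) ⊗ₖ Dm).PosSemidef := by
  intro h
  have := h.dotProduct_mulVec_nonneg (fun p => vv p.2)
  rw [show star (fun p : Fin R × Fin 4 => vv p.2) = fun p => vv p.2 from star_trivial _,
    quadB R _ rfl, quadKv, quadDv] at this
  have hR' : (8 : ℝ) ≤ R := by exact_mod_cast hR
  have h38 : (3:ℝ)/8 < Real.sqrt 2 - 1 := by nlinarith [sqrt2_gt]
  nlinarith [mul_le_mul_of_nonneg_left h38.le (by linarith : (0:ℝ) ≤ R), hR',
    mul_le_mul_of_nonneg_left hR' (by linarith : (0:ℝ) ≤ R)]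

end Stmt15Aux

/-- For the explicit `4×4` total-variation kernel matrix
`K = (1/9)[[1,s,0,s],[s,1,s,0],[0,s,1,s],[s,0,s,1]]` with `s = √2/2` and `Δ = (1/3)I₄`:
(i) `K` is not PSD, witnessed by `v = (1,-1,1,-1)` with `vᵀKv = 4(1-√2)/9 < 0`;
(ii) `Δ` and `R·K + Δ` are PSD for every integer `1 ≤ R ≤ 7`;
(iii) for every `R ≥ 8`, `R·K + Δ` is not PSD, hence `B_R = J_R ⊗ K + I_R ⊗ Δ`
is not PSD. -/
theorem stmt_15 :
    let s : ℝ := Real.sqrt 2 / 2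
    let K : Matrix (Fin 4) (Fin 4) ℝ :=
      (1 / 9 : ℝ) • Matrix.of ![![1, s, 0, s], ![s, 1, s, 0], ![0, s, 1, s], ![s, 0, s, 1]]
    let Δ : Matrix (Fin 4) (Fin 4) ℝ := (1 / 3 : ℝ) • 1
    let v : Fin 4 → ℝ := ![1, -1, 1, -1]
    (¬ K.PosSemidef ∧ v ⬝ᵥ K.mulVec v = 4 * (1 - Real.sqrt 2) / 9 ∧
      4 * (1 - Real.sqrt 2) / 9 < 0) ∧
    (Δ.PosSemidef ∧ ∀ R : ℕ, 1 ≤ R → R ≤ 7 → ((R : ℝ) • K + Δ).PosSemidef) ∧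
    (∀ R : ℕ, 8 ≤ R →
      ¬ ((R : ℝ) • K + Δ).PosSemidef ∧
      ¬ ((Matrix.of fun _ _ => (1 : ℝ) : Matrix (Fin R) (Fin R) ℝ) ⊗ₖ K +
          (1 : Matrix (Fin R) (Fin R) ℝ) ⊗ₖ Δ).PosSemidef) := by
  exact ⟨⟨Stmt15Aux.notPsdK, Stmt15Aux.quadKv, Stmt15Aux.quadKv_neg⟩,
    ⟨Stmt15Aux.psdD, fun R _ h7 => Stmt15Aux.psdRK R h7⟩,
    fun R h8 => ⟨Stmt15Aux.notPsdRK R h8, Stmt15Aux.notPsdB R h8⟩⟩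
end

section
/- For the χ²-divergence generator f(t) = (t−1)², and for every finite family of jointly distributed finitely-supported random variables (X₁,…,Xₙ) with strictly positive marginals, the f-mutual-information matrix with entries M_{ij} = I_f(p_{ij}) is positive semidefinite. -/
open scoped Classical

noncomputable section

section AuxStmt16

variable {n : ℕ} {A : Fin n → Type} [∀ i, Fintype (A i)]

/-- Centered indicator. -/
def eF (P : (∀ i, A i) → ℝ) (i : Fin n) (a : A i) (x : ∀ i, A i) : ℝ :=
  (if x i = a then (1:ℝ) else 0) - marg P i a

/-- Gram vectors. -/
def gF (P : (∀ i, A i) → ℝ) (i : Fin n) (x x' : ∀ i, A i) : ℝ :=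
  ∑ a, eF P i a x * eF P i a x' / marg P i a

lemma sum4_comm {α β γ δ : Type*} [Fintype α] [Fintype β] [Fintype γ] [Fintype δ]
    (f : α → β → γ → δ → ℝ) :
    ∑ a, ∑ b, ∑ c, ∑ d, f a b c d = ∑ c, ∑ d, ∑ a, ∑ b, f a b c d := by
  calc ∑ a, ∑ b, ∑ c, ∑ d, f a b c d
      = ∑ a, ∑ c, ∑ b, ∑ d, f a b c d :=
        Finset.sum_congr rfl fun a _ => Finset.sum_comm
    _ = ∑ c, ∑ a, ∑ b, ∑ d, f a b c d := Finset.sum_comm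
    _ = ∑ c, ∑ a, ∑ d, ∑ b, f a b c d :=
        Finset.sum_congr rfl fun c _ => Finset.sum_congr rfl fun a _ => Finset.sum_comm
    _ = ∑ c, ∑ d, ∑ a, ∑ b, f a b c d :=
        Finset.sum_congr rfl fun c _ => Finset.sum_comm

lemma mfst_pairMarg (P : (∀ i, A i) → ℝ) (i j : Fin n) (a : A i) :
    mfst (pairMarg P i j) a = marg P i a := by
  unfold mfst pairMarg marg
  rw [Finset.sum_comm]
  refine Finset.sum_congr rfl fun x _ => ?_
  by_cases h : x i = a <;> simp [h]

lemma msnd_pairMarg (P : (∀ i, A i) → ℝ) (i j : Fin n) (b : A j) :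
    msnd (pairMarg P i j) b = marg P j b := by
  unfold msnd pairMarg marg
  rw [Finset.sum_comm]
  refine Finset.sum_congr rfl fun x _ => ?_
  by_cases h : x j = b <;> simp [h]

lemma cov_eq (P : (∀ i, A i) → ℝ) (hsum : ∑ x, P x = 1)
    (i j : Fin n) (a : A i) (b : A j) :
    ∑ x, P x * eF P i a x * eF P j b x
      = pairMarg P i j a b - marg P i a * marg P j b := by
  have h1 : ∀ x : ∀ i, A i,
      P x * eF P i a x * eF P j b x
        = (if x i = a ∧ x j = b then P x else 0)
          - (if x i = a then P x else 0) * marg P j b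
          - marg P i a * (if x j = b then P x else 0)
          + marg P i a * marg P j b * P x := by
    intro x
    simp only [eF]
    by_cases hx : x i = a <;> by_cases hy : x j = b <;> simp [hx, hy] <;> ring
  simp only [h1]
  rw [Finset.sum_add_distrib, Finset.sum_sub_distrib, Finset.sum_sub_distrib,
    ← Finset.sum_mul, ← Finset.mul_sum, ← Finset.mul_sum, hsum]
  show pairMarg P i j a b - marg P i a * marg P j b - marg P i a * marg P j b
      + marg P i a * marg P j b * 1 = _
  ring

lemma fMI_chi2 {B C : Type} [Fintype B] [Fintype C] (p : B → C → ℝ)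
    (h1 : ∀ x, 0 < mfst p x) (h2 : ∀ y, 0 < msnd p y) :
    fMI (fun t => (t - 1) ^ 2) p
      = ∑ x, ∑ y, (p x y - mfst p x * msnd p y) ^ 2 / (mfst p x * msnd p y) := by
  unfold fMI
  refine Finset.sum_congr rfl fun x _ => Finset.sum_congr rfl fun y _ => ?_
  have hx := (h1 x).ne'
  have hy := (h2 y).ne'
  field_simp

lemma entry_gram (P : (∀ i, A i) → ℝ) (hsum : ∑ x, P x = 1)
    (hpos : PosMarg P) (i j : Fin n) :
    MIMat (fun t => (t - 1) ^ 2) P i j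
      = ∑ x, ∑ x', P x * P x' * gF P i x x' * gF P j x x' := by
  show fMI (fun t => (t - 1) ^ 2) (pairMarg P i j) = _
  rw [fMI_chi2 (pairMarg P i j)
      (fun a => by rw [mfst_pairMarg]; exact hpos i a)
      (fun b => by rw [msnd_pairMarg]; exact hpos j b)]
  simp only [mfst_pairMarg, msnd_pairMarg]
  calc ∑ a, ∑ b, (pairMarg P i j a b - marg P i a * marg P j b) ^ 2
          / (marg P i a * marg P j b)
      = ∑ a, ∑ b, ∑ x, ∑ x',
          (P x * eF P i a x * eF P j b x) * (P x' * eF P i a x' * eF P j b x')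
            / (marg P i a * marg P j b) := by
        refine Finset.sum_congr rfl fun a _ => Finset.sum_congr rfl fun b _ => ?_
        rw [← cov_eq P hsum i j a b, pow_two, Finset.sum_mul_sum]
        simp only [Finset.sum_div]
    _ = ∑ x, ∑ x', ∑ a, ∑ b,
          (P x * eF P i a x * eF P j b x) * (P x' * eF P i a x' * eF P j b x')
            / (marg P i a * marg P j b) := sum4_comm _
    _ = ∑ x, ∑ x', P x * P x' * gF P i x x' * gF P j x x' := by
        refine Finset.sum_congr rfl fun x _ => Finset.sum_congr rfl fun x' _ => ?_
        rw [gF, gF, show P x * P x' * (∑ a, eF P i a x * eF P i a x' / marg P i a)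
            * (∑ b, eF P j b x * eF P j b x' / marg P j b)
          = (∑ a, eF P i a x * eF P i a x' / marg P i a)
            * (∑ b, eF P j b x * eF P j b x' / marg P j b) * (P x * P x') from by ring,
          Finset.sum_mul_sum, Finset.sum_mul]
        refine Finset.sum_congr rfl fun a _ => ?_
        rw [Finset.sum_mul]
        refine Finset.sum_congr rfl fun b _ => ?_
        ring

end AuxStmt16

/-- For the χ²-divergence generator `f(t) = (t-1)²`, the
`f`-mutual-information matrix of any finite family with strictly positive marginals is
positive semidefinite. -/
theorem stmt_16 (n : ℕ) (A : Fin n → Type) [∀ i, Fintype (A i)]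
    (P : (∀ i, A i) → ℝ) (hP : IsJointPMF P) (hpos : PosMarg P) :
    (MIMat (fun t => (t - 1) ^ 2) P).PosSemidef := by
  obtain ⟨hnn, hsum⟩ := hP
  refine Matrix.posSemidef_iff_dotProduct_mulVec.mpr ⟨?_, ?_⟩
  · ext i j
    simp only [Matrix.conjTranspose_apply, star, entry_gram P hsum hpos]
    refine Finset.sum_congr rfl fun x _ => Finset.sum_congr rfl fun x' _ => ?_
    ring
  · intro v
    have key : dotProduct (star v) ((MIMat (fun t => (t - 1) ^ 2) P).mulVec v)
        = ∑ x, ∑ x', P x * P x' * (∑ i, v i * gF P i x x') ^ 2 := by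
      simp only [dotProduct, Matrix.mulVec, dotProduct, Pi.star_apply,
        star_trivial, entry_gram P hsum hpos]
      calc ∑ i, v i * ∑ j, (∑ x, ∑ x', P x * P x' * gF P i x x' * gF P j x x') * v j
          = ∑ i, ∑ j, ∑ x, ∑ x',
              P x * P x' * (v i * gF P i x x') * (v j * gF P j x x') := by
            refine Finset.sum_congr rfl fun i _ => ?_
            rw [Finset.mul_sum]
            refine Finset.sum_congr rfl fun j _ => ?_
            rw [Finset.sum_mul, Finset.mul_sum]
            refine Finset.sum_congr rfl fun x _ => ?_
            rw [Finset.sum_mul, Finset.mul_sum]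
            refine Finset.sum_congr rfl fun x' _ => ?_
            ring
        _ = ∑ x, ∑ x', ∑ i, ∑ j,
              P x * P x' * (v i * gF P i x x') * (v j * gF P j x x') := sum4_comm _
        _ = ∑ x, ∑ x', P x * P x' * (∑ i, v i * gF P i x x') ^ 2 := by
            refine Finset.sum_congr rfl fun x _ => Finset.sum_congr rfl fun x' _ => ?_
            rw [pow_two, show P x * P x' * ((∑ i, v i * gF P i x x')
                * (∑ i, v i * gF P i x x'))
              = (∑ i, v i * gF P i x x') * (∑ j, v j * gF P j x x') * (P x * P x') from
                by ring, Finset.sum_mul_sum, Finset.sum_mul]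
            refine Finset.sum_congr rfl fun i _ => ?_
            rw [Finset.sum_mul]
            refine Finset.sum_congr rfl fun j _ => ?_
            ring
    rw [key]
    refine Finset.sum_nonneg fun x _ => Finset.sum_nonneg fun x' _ => ?_
    have := hnn x
    have := hnn x'
    positivity
end
end

section
/- For the total-variation generator f(t) = (1/2)|t − 1|: for every δ > 0 there exist n ∈ ℕ and a finite family of jointly distributed finitely-supported random variables (X₁,…,Xₙ) that is δ-pairwise-weakly-dependent but whose f-mutual-information matrix M^(f) with entries M^(f)_{ij} = I_f(p_{ij}) is not positive semidefinite. -/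
open scoped Classical

noncomputable section

lemma sum_pi_prod {ι : Type} [Fintype ι] [DecidableEq ι] {α : ι → Type} [∀ i, Fintype (α i)]
    (f : ∀ i, α i → ℝ) :
    ∑ x : ∀ i, α i, ∏ i, f i (x i) = ∏ i, ∑ a, f i a :=
  (Fintype.prod_sum f).symm

lemma sum_pi_special {m : ℕ} (S : Finset (Fin m)) (h : Fin m → Bool → ℝ) :
    ∑ v : Fin m → Bool, ∏ i ∈ S, h i (v i)
      = (∏ i ∈ S, ∑ b, h i b) * 2 ^ (m - S.card) := by
  have key : ∀ v : Fin m → Bool, ∏ i ∈ S, h i (v i)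
      = ∏ i, (if i ∈ S then h i (v i) else 1) := by
    intro v
    rw [Finset.prod_ite_mem Finset.univ S (fun i => h i (v i)), Finset.univ_inter]
  simp_rw [key]
  rw [sum_pi_prod (fun i b => if i ∈ S then h i b else 1)]
  have h2 : ∀ i, (∑ b : Bool, if i ∈ S then h i b else 1)
      = if i ∈ S then (∑ b, h i b) else 2 := by
    intro i; split <;> simp
  simp_rw [h2]
  rw [Finset.prod_ite, Finset.prod_const]
  congr 2
  · simp
  · simp [Finset.filter_not, Finset.card_sdiff_of_subset (Finset.subset_univ _)]

lemma prod_eq_of_special {m : ℕ} (S : Finset (Fin m)) (F : Fin m → ℝ) (Dv : ℝ)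
    (h : ∀ i ∉ S, F i = Dv) : ∏ i, F i = (∏ i ∈ S, F i) * Dv ^ (m - S.card) := by
  rw [← Finset.prod_mul_prod_compl S F]
  congr 1
  rw [Finset.prod_congr rfl (fun i hi => h i (by simpa using hi)), Finset.prod_const]
  congr 1
  simp [Finset.card_compl]

/-- The coupled bit pair pmf: `P(a,b) = (1 + ε·[a=b] - ε·[a≠b])/4`. -/
def gg (ε : ℝ) (a b : Bool) : ℝ := (1 + if a = b then ε else -ε) / 4

/-- The joint pmf of the family: `m` vectors `X_i` and one vector `Y` (index 0). -/
def PP (m : ℕ) (ε : ℝ) (z : Fin (m+1) → (Fin m → Bool)) : ℝ :=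
  (2:ℝ)⁻¹ ^ (m*(m-1)) * ∏ i : Fin m, gg ε (z i.succ i) (z 0 i)

lemma gg_sum_right (ε : ℝ) (a : Bool) : ∑ b, gg ε a b = 1/2 := by
  cases a <;> simp [gg] <;> ring

lemma gg_sum_left (ε : ℝ) (b : Bool) : ∑ a, gg ε a b = 1/2 := by
  cases b <;> simp [gg] <;> ring

lemma gg_nonneg {ε : ℝ} (hε : |ε| ≤ 1) (a b : Bool) : 0 ≤ gg ε a b := by
  have h1 : -1 ≤ ε := neg_le_of_abs_le hε
  have h2 : ε ≤ 1 := le_of_abs_le hε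
  unfold gg; split <;> nlinarith

/-- Master cylinder-sum lemma. -/
lemma cyl (m : ℕ) (ε : ℝ) (φ : (Fin m → Bool) → ℝ) (ψ : Fin m → (Fin m → Bool) → ℝ) :
    ∑ z : Fin (m+1) → (Fin m → Bool), (φ (z 0) * ∏ i, ψ i (z i.succ)) * PP m ε z
    = (2:ℝ)⁻¹ ^ (m*(m-1)) *
        ∑ y, φ y * ∏ i, ∑ v, ψ i v * gg ε (v i) (y i) := by
  rw [← Equiv.sum_comp (Fin.consEquiv (fun _ : Fin (m+1) => Fin m → Bool))]
  rw [Fintype.sum_prod_type]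
  rw [Finset.mul_sum]
  refine Finset.sum_congr rfl fun y _ => ?_
  simp only [Fin.consEquiv_apply, Fin.cons_zero, Fin.cons_succ, PP]
  rw [← sum_pi_prod (fun (i : Fin m) (v : Fin m → Bool) => ψ i v * gg ε (v i) (y i))]
  rw [Finset.mul_sum, Finset.mul_sum]
  refine Finset.sum_congr rfl fun x _ => ?_
  rw [Finset.prod_mul_distrib]
  ring

lemma two_cancel (a b : ℕ) (h : a = b) : (2:ℝ)⁻¹^a * 2^b = 1 := by
  subst h; rw [← mul_pow]; norm_num

lemma two_cancel' (a b c : ℕ) (h : a = b + c) : (2:ℝ)⁻¹^a * 2^b = 2⁻¹^c := by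
  subst h; rw [pow_add, mul_right_comm, ← mul_pow]; norm_num

lemma ggFree (m : ℕ) (ε : ℝ) (i : Fin m) (c : Bool) :
    ∑ v : Fin m → Bool, gg ε (v i) c = (1/2) * 2^(m-1) := by
  have h := sum_pi_special {i} (fun _ b => gg ε b c)
  simp only [Finset.prod_singleton, Finset.card_singleton] at h
  rw [h, gg_sum_left]

lemma hE (M : ℕ) : (1/2:ℝ) * 2^(M+1) = 2^M := by rw [pow_succ]; ring

lemma PP_total (M : ℕ) (ε : ℝ) :
    ∑ z : Fin (M+2+1) → (Fin (M+2) → Bool), PP (M+2) ε z = 1 := by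
  have h := cyl (M+2) ε (fun _ => 1) (fun _ _ => 1)
  simp only [one_mul, Finset.prod_const_one] at h
  rw [h]
  simp_rw [ggFree]
  rw [show M+2-1 = M+1 from rfl, hE M]
  rw [Finset.prod_const, Finset.sum_const]
  simp only [Finset.card_univ, Fintype.card_pi, Fintype.card_bool, Finset.prod_const,
    Fintype.card_fin, nsmul_eq_mul]
  push_cast
  rw [← pow_mul, ← pow_add]
  exact two_cancel _ _ (by ring)


lemma pairMarg_diag {n : ℕ} {A : Fin n → Type} [∀ i, Fintype (A i)]
    (P : (∀ i, A i) → ℝ) (i : Fin n) (a b : A i) :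
    pairMarg P i i a b = if a = b then marg P i a else 0 := by
  unfold pairMarg marg
  rcases eq_or_ne a b with rfl | hab
  · simp
  · rw [if_neg hab]
    refine Finset.sum_eq_zero fun z _ => ?_
    rw [if_neg]
    rintro ⟨h1, h2⟩
    exact hab (h1 ▸ h2)

lemma pairMarg_symm {n : ℕ} {A : Fin n → Type} [∀ i, Fintype (A i)]
    (P : (∀ i, A i) → ℝ) (i j : Fin n) (a : A i) (b : A j) :
    pairMarg P i j a b = pairMarg P j i b a := by
  unfold pairMarg
  exact Finset.sum_congr rfl fun z _ => if_congr (and_comm) rfl rfl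

lemma mfst_pair {n : ℕ} {A : Fin n → Type} [∀ i, Fintype (A i)]
    (P : (∀ i, A i) → ℝ) (i j : Fin n) (a : A i) :
    mfst (pairMarg P i j) a = marg P i a := by
  unfold mfst pairMarg marg
  rw [Finset.sum_comm]
  refine Finset.sum_congr rfl fun z _ => ?_
  simp only [ite_and]
  by_cases h : z i = a
  · simp only [if_pos h]
    rw [Finset.sum_ite_eq Finset.univ (z j) (fun _ => P z)]
    simp
  · simp [h]

lemma msnd_pair {n : ℕ} {A : Fin n → Type} [∀ i, Fintype (A i)]
    (P : (∀ i, A i) → ℝ) (i j : Fin n) (b : A j) :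
    msnd (pairMarg P i j) b = marg P j b := by
  unfold msnd pairMarg marg
  rw [Finset.sum_comm]
  refine Finset.sum_congr rfl fun z _ => ?_
  by_cases h : z j = b
  · simp only [h, and_true]
    rw [Finset.sum_ite_eq Finset.univ (z i) (fun _ => P z)]
    simp
  · simp [h]



lemma marg_eq {n : ℕ} {A : Fin n → Type} [∀ i, Fintype (A i)] [∀ i, DecidableEq (A i)]
    (P : (∀ i, A i) → ℝ) (i : Fin n) (a : A i) :
    marg P i a = ∑ x, if x i = a then P x else 0 := by
  unfold marg
  exact Finset.sum_congr rfl fun z _ => by congr!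

lemma pairMarg_eq {n : ℕ} {A : Fin n → Type} [∀ i, Fintype (A i)] [∀ i, DecidableEq (A i)]
    (P : (∀ i, A i) → ℝ) (i j : Fin n) (a : A i) (b : A j) :
    pairMarg P i j a b = ∑ x, if x i = a ∧ x j = b then P x else 0 := by
  unfold pairMarg
  exact Finset.sum_congr rfl fun z _ => by congr!

lemma ggFree' (M : ℕ) (ε : ℝ) (i : Fin (M+2)) (c : Bool) :
    ∑ v : Fin (M+2) → Bool, gg ε (v i) c = 2^M := by
  rw [ggFree]; exact hE M

lemma ggFree2 (M : ℕ) (ε : ℝ) (i : Fin (M+2)) (c : Bool) :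
    ∑ v : Fin (M+2) → Bool, gg ε c (v i) = 2^M := by
  have h := sum_pi_special {i} (fun _ b => gg ε c b)
  simp only [Finset.prod_singleton, Finset.card_singleton] at h
  rw [h, gg_sum_right]
  exact hE M

lemma marg_zero (M : ℕ) (ε : ℝ) (a : Fin (M+2) → Bool) :
    marg (A := fun _ : Fin (M+2+1) => Fin (M+2) → Bool) (PP (M+2) ε) 0 a
      = (2:ℝ)⁻¹^(M+2) := by
  have h := cyl (M+2) ε (fun y => if y = a then 1 else 0) (fun _ _ => 1)
  simp only [Finset.prod_const_one, mul_one, ite_mul, one_mul, zero_mul] at h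
  rw [marg_eq, h, Finset.sum_ite_eq' Finset.univ a]
  simp only [Finset.mem_univ, if_true]
  simp_rw [ggFree' M ε]
  rw [Finset.prod_const, Finset.card_univ, Fintype.card_fin, ← pow_mul]
  exact two_cancel' ((M+2)*(M+1)) (M*(M+2)) (M+2) (by ring)

lemma marg_succ (M : ℕ) (ε : ℝ) (k : Fin (M+2)) (a : Fin (M+2) → Bool) :
    marg (A := fun _ : Fin (M+2+1) => Fin (M+2) → Bool) (PP (M+2) ε) k.succ a
      = (2:ℝ)⁻¹^(M+2) := by
  have h := cyl (M+2) ε (fun _ => 1)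
      (fun i v => if i = k then (if v = a then 1 else 0) else 1)
  simp only [one_mul] at h
  have key : ∀ (y : Fin (M+2) → Bool) (i : Fin (M+2)),
      (∑ v : Fin (M+2) → Bool,
        (if i = k then (if v = a then (1:ℝ) else 0) else 1) * gg ε (v i) (y i))
      = if i = k then gg ε (a i) (y i) else 2^M := by
    intro y i
    by_cases hik : i = k
    · simp only [if_pos hik, ite_mul, one_mul, zero_mul]
      rw [Finset.sum_ite_eq' Finset.univ a (fun v => gg ε (v i) (y i))]
      simp
    · simp only [if_neg hik, one_mul]
      exact ggFree' M ε i (y i)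
  simp only [key] at h
  have key2 : ∀ z : Fin (M+2+1) → Fin (M+2) → Bool,
      (∏ i : Fin (M+2), if i = k then (if z i.succ = a then (1:ℝ) else 0) else 1)
      = if z k.succ = a then 1 else 0 := by
    intro z
    rw [Finset.prod_ite_eq' Finset.univ k (fun i => if z i.succ = a then (1:ℝ) else 0)]
    simp
  simp only [key2, ite_mul, one_mul, zero_mul] at h
  rw [marg_eq, h]
  have key3 : ∀ y : Fin (M+2) → Bool,
      (∏ i : Fin (M+2), if i = k then gg ε (a i) (y i) else (2:ℝ)^M)
      = gg ε (a k) (y k) * ((2:ℝ)^M)^(M+1) := by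
    intro y
    rw [prod_eq_of_special {k} _ ((2:ℝ)^M) (fun i hi => if_neg (by simpa using hi))]
    simp
  simp only [key3]
  rw [← Finset.sum_mul, ggFree2 M ε k (a k), ← pow_succ']
  rw [← pow_mul]
  exact two_cancel' ((M+2)*(M+1)) (M*(M+2)) (M+2) (by ring)

lemma pair_zero_succ (M : ℕ) (ε : ℝ) (k : Fin (M+2)) (a b : Fin (M+2) → Bool) :
    pairMarg (A := fun _ : Fin (M+2+1) => Fin (M+2) → Bool) (PP (M+2) ε)
      0 k.succ a b
      = (1 + (if b k = a k then ε else -ε)) * ((2:ℝ)⁻¹^(M+2))^2 := by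
  have h := cyl (M+2) ε (fun y => if y = a then 1 else 0)
      (fun i v => if i = k then (if v = b then 1 else 0) else 1)
  simp only [show M+2-1 = M+1 from rfl] at h
  have key : ∀ (y : Fin (M+2) → Bool) (i : Fin (M+2)),
      (∑ v : Fin (M+2) → Bool,
        (if i = k then (if v = b then (1:ℝ) else 0) else 1) * gg ε (v i) (y i))
      = if i = k then gg ε (b i) (y i) else 2^M := by
    intro y i
    by_cases hik : i = k
    · simp only [if_pos hik, ite_mul, one_mul, zero_mul]
      rw [Finset.sum_ite_eq' Finset.univ b (fun v => gg ε (v i) (y i))]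
      simp
    · simp only [if_neg hik, one_mul]
      exact ggFree' M ε i (y i)
  simp only [key] at h
  have key2 : ∀ z : Fin (M+2+1) → Fin (M+2) → Bool,
      (∏ i : Fin (M+2), if i = k then (if z i.succ = b then (1:ℝ) else 0) else 1)
      = if z k.succ = b then 1 else 0 := by
    intro z
    rw [Finset.prod_ite_eq' Finset.univ k (fun i => if z i.succ = b then (1:ℝ) else 0)]
    simp
  simp only [key2] at h
  have key4 : ∀ z : Fin (M+2+1) → Fin (M+2) → Bool,
      ((if z 0 = a then (1:ℝ) else 0) * (if z k.succ = b then (1:ℝ) else 0))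
        * PP (M+2) ε z
      = if z 0 = a ∧ z k.succ = b then PP (M+2) ε z else 0 := by
    intro z
    by_cases h1 : z 0 = a <;> by_cases h2 : z k.succ = b <;> simp [h1, h2]
  simp only [key4] at h
  rw [pairMarg_eq, h]
  have key3 : ∀ y : Fin (M+2) → Bool,
      (∏ i : Fin (M+2), if i = k then gg ε (b i) (y i) else (2:ℝ)^M)
      = gg ε (b k) (y k) * ((2:ℝ)^M)^(M+1) := by
    intro y
    rw [prod_eq_of_special {k} _ ((2:ℝ)^M) (fun i hi => if_neg (by simpa using hi))]
    simp
  simp only [ite_mul, one_mul, zero_mul, key3]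
  rw [Finset.sum_ite_eq' Finset.univ a
      (fun y => gg ε (b k) (y k) * ((2:ℝ)^M)^(M+1))]
  simp only [Finset.mem_univ, if_true]
  have hnum : (2:ℝ)⁻¹ ^ ((M+2)*(M+1)) * ((2:ℝ)^M)^(M+1)
      = 4 * ((2:ℝ)⁻¹^(M+2))^2 := by
    rw [← pow_mul]
    rw [two_cancel' ((M+2)*(M+1)) (M*(M+1)) (2*M+2) (by ring)]
    rw [← pow_mul, show (M+2)*2 = (2*M+2)+2 by ring, pow_add]
    ring
  calc (2:ℝ)⁻¹ ^ ((M+2)*(M+1)) * (gg ε (b k) (a k) * ((2:ℝ)^M)^(M+1))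
      = (4 * gg ε (b k) (a k)) * ((2:ℝ)⁻¹ ^ ((M+2)*(M+1)) * ((2:ℝ)^M)^(M+1)) / 4 := by
        ring
    _ = (1 + (if b k = a k then ε else -ε)) * ((2:ℝ)⁻¹^(M+2))^2 := by
        rw [hnum]
        have : (4:ℝ) * gg ε (b k) (a k) = 1 + (if b k = a k then ε else -ε) := by
          unfold gg; ring
        rw [this]; ring

lemma pair_succ_succ (M : ℕ) (ε : ℝ) (k l : Fin (M+2)) (hkl : k ≠ l)
    (a b : Fin (M+2) → Bool) :
    pairMarg (A := fun _ : Fin (M+2+1) => Fin (M+2) → Bool) (PP (M+2) ε)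
      k.succ l.succ a b = ((2:ℝ)⁻¹^(M+2))^2 := by
  have hlk : l ≠ k := hkl.symm
  have h := cyl (M+2) ε (fun _ => 1)
      (fun i v => if i = k then (if v = a then 1 else 0)
        else if i = l then (if v = b then 1 else 0) else 1)
  simp only [show M+2-1 = M+1 from rfl, one_mul] at h
  have key : ∀ (y : Fin (M+2) → Bool) (i : Fin (M+2)),
      (∑ v : Fin (M+2) → Bool,
        (if i = k then (if v = a then (1:ℝ) else 0)
          else if i = l then (if v = b then (1:ℝ) else 0) else 1) * gg ε (v i) (y i))
      = if i = k then gg ε (a i) (y i)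
        else if i = l then gg ε (b i) (y i) else 2^M := by
    intro y i
    by_cases hik : i = k
    · simp only [if_pos hik, ite_mul, one_mul, zero_mul]
      rw [Finset.sum_ite_eq' Finset.univ a (fun v => gg ε (v i) (y i))]
      simp
    · by_cases hil : i = l
      · simp only [if_neg hik, if_pos hil, ite_mul, one_mul, zero_mul]
        rw [Finset.sum_ite_eq' Finset.univ b (fun v => gg ε (v i) (y i))]
        simp
      · simp only [if_neg hik, if_neg hil, one_mul]
        exact ggFree' M ε i (y i)
  simp only [key] at h
  have key2 : ∀ z : Fin (M+2+1) → Fin (M+2) → Bool,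
      (∏ i : Fin (M+2), if i = k then (if z i.succ = a then (1:ℝ) else 0)
        else if i = l then (if z i.succ = b then (1:ℝ) else 0) else 1)
      = if z k.succ = a ∧ z l.succ = b then 1 else 0 := by
    intro z
    rw [prod_eq_of_special {k,l} _ 1
      (fun i hi => by
        simp only [Finset.mem_insert, Finset.mem_singleton, not_or] at hi
        rw [if_neg hi.1, if_neg hi.2])]
    rw [Finset.prod_pair hkl]
    simp only [if_pos rfl, if_neg hlk, one_pow, mul_one]
    by_cases h1 : z k.succ = a <;> by_cases h2 : z l.succ = b <;> simp [h1, h2]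
  simp only [key2, ite_mul, one_mul, zero_mul] at h
  rw [pairMarg_eq, h]
  have key3 : ∀ y : Fin (M+2) → Bool,
      (∏ i : Fin (M+2), if i = k then gg ε (a i) (y i)
        else if i = l then gg ε (b i) (y i) else (2:ℝ)^M)
      = gg ε (a k) (y k) * gg ε (b l) (y l) * ((2:ℝ)^M)^M := by
    intro y
    rw [prod_eq_of_special {k,l} _ ((2:ℝ)^M)
      (fun i hi => by
        simp only [Finset.mem_insert, Finset.mem_singleton, not_or] at hi
        rw [if_neg hi.1, if_neg hi.2])]
    rw [Finset.prod_pair hkl]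
    simp only [eq_self_iff_true, if_true, if_neg hlk]
    rw [show ({k,l} : Finset (Fin (M+2))).card = 2 from by
      rw [Finset.card_insert_of_notMem (by simpa using hkl), Finset.card_singleton]]
    norm_num
  simp only [key3]
  rw [← Finset.sum_mul]
  have h5 := sum_pi_special {k,l} (fun i c => if i = k then gg ε (a k) c else gg ε (b l) c)
  simp only [Finset.prod_pair hkl] at h5
  simp only [eq_self_iff_true, if_true, if_neg hlk] at h5
  rw [show ({k,l} : Finset (Fin (M+2))).card = 2 from by
      rw [Finset.card_insert_of_notMem (by simpa using hkl), Finset.card_singleton]] at h5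
  rw [h5, gg_sum_right, gg_sum_right]
  rw [show M+2-2 = M from rfl]
  rw [show ((1/2:ℝ)*(1/2)*2^M) * ((2:ℝ)^M)^M = (1/4) * ((2:ℝ)^M)^(M+1) by
    rw [pow_succ']; ring]
  rw [← pow_mul, show (2:ℝ)⁻¹ ^ ((M+2)*(M+1)) * ((1/4) * 2^(M*(M+1)))
      = (1/4) * ((2:ℝ)⁻¹ ^ ((M+2)*(M+1)) * 2^(M*(M+1))) by ring]
  rw [two_cancel' ((M+2)*(M+1)) (M*(M+1)) (2*M+2) (by ring)]
  rw [← pow_mul, show (M+2)*2 = (2*M+2)+2 by ring, pow_add]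
  ring

lemma margAll (M : ℕ) (ε : ℝ) (i : Fin (M+2+1)) (a : Fin (M+2) → Bool) :
    marg (A := fun _ : Fin (M+2+1) => Fin (M+2) → Bool) (PP (M+2) ε) i a
      = (2:ℝ)⁻¹^(M+2) := by
  induction i using Fin.cases with
  | zero => exact marg_zero M ε a
  | succ k => exact marg_succ M ε k a

lemma two_inv_mul (M : ℕ) : (2:ℝ)^(M+2) * (2:ℝ)⁻¹^(M+2) = 1 := by
  rw [← mul_pow]; norm_num

lemma fMI_cross0 (M : ℕ) (ε : ℝ) (hε0 : 0 ≤ ε) (k : Fin (M+2)) :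
    fMI (fun t => (1/2) * |t - 1|)
      (pairMarg (A := fun _ : Fin (M+2+1) => Fin (M+2) → Bool) (PP (M+2) ε) 0 k.succ)
      = ε/2 := by
  have hT0 : (0:ℝ) < (2:ℝ)⁻¹^(M+2) := by positivity
  unfold fMI
  have hsum : ∀ a b : Fin (M+2) → Bool,
      mfst (pairMarg (A := fun _ : Fin (M+2+1) => Fin (M+2) → Bool) (PP (M+2) ε) 0 k.succ) a *
        msnd (pairMarg (A := fun _ : Fin (M+2+1) => Fin (M+2) → Bool) (PP (M+2) ε) 0 k.succ) b *
        (fun t => (1/2) * |t - 1|)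
          (pairMarg (A := fun _ : Fin (M+2+1) => Fin (M+2) → Bool) (PP (M+2) ε) 0 k.succ a b /
            (mfst (pairMarg (A := fun _ : Fin (M+2+1) => Fin (M+2) → Bool) (PP (M+2) ε) 0 k.succ) a *
             msnd (pairMarg (A := fun _ : Fin (M+2+1) => Fin (M+2) → Bool) (PP (M+2) ε) 0 k.succ) b))
      = (2:ℝ)⁻¹^(M+2) * (2:ℝ)⁻¹^(M+2) * (ε/2) := by
    intro a b
    rw [mfst_pair, msnd_pair, margAll, margAll, pair_zero_succ]
    rw [pow_two, mul_div_assoc, div_self (by positivity), mul_one]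
    simp only []
    rw [add_sub_cancel_left]
    split_ifs with hb
    · rw [abs_of_nonneg hε0]; ring
    · rw [abs_neg, abs_of_nonneg hε0]; ring
  simp_rw [hsum]
  rw [Finset.sum_const, Finset.sum_const, Finset.card_univ]
  rw [show Fintype.card (Fin (M+2) → Bool) = 2^(M+2) from by
    simp [Fintype.card_fun]]
  rw [nsmul_eq_mul, nsmul_eq_mul, Nat.cast_pow, Nat.cast_ofNat]
  have h1 := two_inv_mul M
  linear_combination (ε/2) * ((2:ℝ)^(M+2) * (2:ℝ)⁻¹^(M+2) + 1) * h1

lemma fMI_cross0' (M : ℕ) (ε : ℝ) (hε0 : 0 ≤ ε) (k : Fin (M+2)) :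
    fMI (fun t => (1/2) * |t - 1|)
      (pairMarg (A := fun _ : Fin (M+2+1) => Fin (M+2) → Bool) (PP (M+2) ε) k.succ 0)
      = ε/2 := by
  have hT0 : (0:ℝ) < (2:ℝ)⁻¹^(M+2) := by positivity
  unfold fMI
  have hsum : ∀ a b : Fin (M+2) → Bool,
      mfst (pairMarg (A := fun _ : Fin (M+2+1) => Fin (M+2) → Bool) (PP (M+2) ε) k.succ 0) a *
        msnd (pairMarg (A := fun _ : Fin (M+2+1) => Fin (M+2) → Bool) (PP (M+2) ε) k.succ 0) b *
        (fun t => (1/2) * |t - 1|)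
          (pairMarg (A := fun _ : Fin (M+2+1) => Fin (M+2) → Bool) (PP (M+2) ε) k.succ 0 a b /
            (mfst (pairMarg (A := fun _ : Fin (M+2+1) => Fin (M+2) → Bool) (PP (M+2) ε) k.succ 0) a *
             msnd (pairMarg (A := fun _ : Fin (M+2+1) => Fin (M+2) → Bool) (PP (M+2) ε) k.succ 0) b))
      = (2:ℝ)⁻¹^(M+2) * (2:ℝ)⁻¹^(M+2) * (ε/2) := by
    intro a b
    rw [mfst_pair, msnd_pair, margAll, margAll, pairMarg_symm, pair_zero_succ]
    rw [pow_two, mul_div_assoc, div_self (by positivity), mul_one]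
    simp only []
    rw [add_sub_cancel_left]
    split_ifs with hb
    · rw [abs_of_nonneg hε0]; ring
    · rw [abs_neg, abs_of_nonneg hε0]; ring
  simp_rw [hsum]
  rw [Finset.sum_const, Finset.sum_const, Finset.card_univ]
  rw [show Fintype.card (Fin (M+2) → Bool) = 2^(M+2) from by
    simp [Fintype.card_fun]]
  rw [nsmul_eq_mul, nsmul_eq_mul, Nat.cast_pow, Nat.cast_ofNat]
  have h1 := two_inv_mul M
  linear_combination (ε/2) * ((2:ℝ)^(M+2) * (2:ℝ)⁻¹^(M+2) + 1) * h1

lemma fMI_indep (M : ℕ) (ε : ℝ) (k l : Fin (M+2)) (hkl : k ≠ l) :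
    fMI (fun t => (1/2) * |t - 1|)
      (pairMarg (A := fun _ : Fin (M+2+1) => Fin (M+2) → Bool) (PP (M+2) ε) k.succ l.succ)
      = 0 := by
  have hT0 : (0:ℝ) < (2:ℝ)⁻¹^(M+2) := by positivity
  unfold fMI
  have hsum : ∀ a b : Fin (M+2) → Bool,
      mfst (pairMarg (A := fun _ : Fin (M+2+1) => Fin (M+2) → Bool) (PP (M+2) ε) k.succ l.succ) a *
        msnd (pairMarg (A := fun _ : Fin (M+2+1) => Fin (M+2) → Bool) (PP (M+2) ε) k.succ l.succ) b *
        (fun t => (1/2) * |t - 1|)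
          (pairMarg (A := fun _ : Fin (M+2+1) => Fin (M+2) → Bool) (PP (M+2) ε) k.succ l.succ a b /
            (mfst (pairMarg (A := fun _ : Fin (M+2+1) => Fin (M+2) → Bool) (PP (M+2) ε) k.succ l.succ) a *
             msnd (pairMarg (A := fun _ : Fin (M+2+1) => Fin (M+2) → Bool) (PP (M+2) ε) k.succ l.succ) b))
      = 0 := by
    intro a b
    rw [mfst_pair, msnd_pair, margAll, margAll, pair_succ_succ M ε k l hkl]
    rw [pow_two, div_self (by positivity)]
    simp
  simp_rw [hsum]
  simp

lemma fMI_diag (M : ℕ) (ε : ℝ) (i : Fin (M+2+1)) :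
    fMI (fun t => (1/2) * |t - 1|)
      (pairMarg (A := fun _ : Fin (M+2+1) => Fin (M+2) → Bool) (PP (M+2) ε) i i)
      = 1 - (2:ℝ)⁻¹^(M+2) := by
  have hA0 : (0:ℝ) < (2:ℝ)^(M+2) := by positivity
  have hA1 : (1:ℝ) ≤ (2:ℝ)^(M+2) := one_le_pow₀ one_le_two
  have hT : ((2:ℝ)⁻¹)^(M+2) = ((2:ℝ)^(M+2))⁻¹ := by rw [inv_pow]
  unfold fMI
  have hsum : ∀ a b : Fin (M+2) → Bool,
      mfst (pairMarg (A := fun _ : Fin (M+2+1) => Fin (M+2) → Bool) (PP (M+2) ε) i i) a *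
        msnd (pairMarg (A := fun _ : Fin (M+2+1) => Fin (M+2) → Bool) (PP (M+2) ε) i i) b *
        (fun t => (1/2) * |t - 1|)
          (pairMarg (A := fun _ : Fin (M+2+1) => Fin (M+2) → Bool) (PP (M+2) ε) i i a b /
            (mfst (pairMarg (A := fun _ : Fin (M+2+1) => Fin (M+2) → Bool) (PP (M+2) ε) i i) a *
             msnd (pairMarg (A := fun _ : Fin (M+2+1) => Fin (M+2) → Bool) (PP (M+2) ε) i i) b))
      = (if a = b
          then ((2:ℝ)^(M+2))⁻¹ * ((2:ℝ)^(M+2))⁻¹ * ((1/2) * ((2:ℝ)^(M+2) - 1))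
               - ((2:ℝ)^(M+2))⁻¹ * ((2:ℝ)^(M+2))⁻¹ * (1/2)
          else 0)
        + ((2:ℝ)^(M+2))⁻¹ * ((2:ℝ)^(M+2))⁻¹ * (1/2) := by
    intro a b
    rw [mfst_pair, msnd_pair, margAll, margAll, pairMarg_diag, margAll, hT]
    simp only []
    rcases eq_or_ne a b with rfl | hab
    · rw [if_pos rfl, if_pos rfl]
      have : ((2:ℝ)^(M+2))⁻¹ / (((2:ℝ)^(M+2))⁻¹ * ((2:ℝ)^(M+2))⁻¹) = (2:ℝ)^(M+2) := by
        field_simp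
      rw [this, abs_of_nonneg (by linarith)]
      ring
    · rw [if_neg hab, if_neg hab, zero_div]
      rw [show |(0:ℝ) - 1| = 1 by norm_num]
      ring
  simp_rw [hsum, Finset.sum_add_distrib, Finset.sum_ite_eq Finset.univ,
    Finset.mem_univ, if_true, Finset.sum_const, Finset.card_univ]
  rw [show Fintype.card (Fin (M+2) → Bool) = 2^(M+2) from by
    simp [Fintype.card_fun]]
  rw [nsmul_eq_mul, nsmul_eq_mul, Nat.cast_pow, Nat.cast_ofNat, hT]
  have hAne : ((2:ℝ)^(M+2)) ≠ 0 := ne_of_gt hA0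
  generalize hAdef : (2:ℝ)^(M+2) = A at hAne ⊢
  have hA1' : A * A⁻¹ = 1 := mul_inv_cancel₀ hAne
  have hA4 : (2:ℝ)^M*4 = A := by rw [← hAdef]; ring
  field_simp
  linear_combination (A*A⁻¹)^2 * hA4 + A*(A*A⁻¹+1) * hA1'

lemma quad_neg (M : ℕ) (ε : ℝ) (hε0 : 0 < ε) (hM4 : 4 ≤ ((M:ℝ)+2) * ε^2)
    (T : ℝ) (hT0 : 0 < T) :
    (∑ i : Fin (M+2+1), (if i = 0 then -(((M:ℝ)+2)*(ε/2)) else 1) *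
      ∑ j : Fin (M+2+1), (if i = j then 1 - T else if i = 0 ∨ j = 0 then ε/2 else 0) *
        (if j = 0 then -(((M:ℝ)+2)*(ε/2)) else 1)) < 0 := by
  set s : ℝ := ((M:ℝ)+2)*(ε/2) with hs
  have inner0 : (∑ j : Fin (M+2+1),
      (if (0 : Fin (M+2+1)) = j then 1 - T else if (0 : Fin (M+2+1)) = 0 ∨ j = 0 then ε/2 else 0) *
        (if j = 0 then -s else 1))
      = (1-T) * (-s) + ((M:ℝ)+2)*(ε/2) := by
    have t0 : ∀ l : Fin (M+2),
        ((if (0 : Fin (M+2+1)) = l.succ then 1 - T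
          else if (0 : Fin (M+2+1)) = 0 ∨ l.succ = 0 then ε/2 else 0) *
          (if l.succ = 0 then -s else 1)) = ε/2 := by
      intro l
      rw [if_neg (Fin.succ_ne_zero l), mul_one, if_neg (Fin.succ_ne_zero l).symm,
        if_pos (Or.inl rfl)]
    rw [Fin.sum_univ_succ]
    rw [Finset.sum_congr rfl fun l _ => t0 l]
    rw [Finset.sum_const, Finset.card_univ, Fintype.card_fin, nsmul_eq_mul]
    push_cast
    norm_num
  have innerS : ∀ k : Fin (M+2),
      (∑ j : Fin (M+2+1),
        (if k.succ = j then 1 - T else if k.succ = 0 ∨ j = 0 then ε/2 else 0) *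
          (if j = 0 then -s else 1))
      = (ε/2) * (-s) + (1-T) := by
    intro k
    have t1 : ∀ l : Fin (M+2),
        ((if k.succ = l.succ then 1 - T
          else if k.succ = 0 ∨ l.succ = 0 then ε/2 else 0) *
          (if l.succ = 0 then -s else 1)) = if k = l then 1 - T else 0 := by
      intro l
      rw [if_neg (Fin.succ_ne_zero l), mul_one]
      by_cases hk : k = l
      · rw [if_pos (by rw [hk]), if_pos hk]
      · rw [if_neg (fun h => hk (Fin.succ_injective _ h)),
          if_neg (by push_neg; exact ⟨Fin.succ_ne_zero k, Fin.succ_ne_zero l⟩), if_neg hk]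
    rw [Fin.sum_univ_succ]
    rw [Finset.sum_congr rfl fun l _ => t1 l]
    rw [Finset.sum_ite_eq Finset.univ k (fun _ => 1 - T)]
    simp [Fin.succ_ne_zero]
  have t2 : ∀ k : Fin (M+2),
      ((if k.succ = 0 then -s else (1:ℝ)) *
        ∑ j : Fin (M+2+1),
          (if k.succ = j then 1 - T else if k.succ = 0 ∨ j = 0 then ε/2 else 0) *
            (if j = 0 then -s else 1))
      = (ε/2) * (-s) + (1-T) := fun k => by
    rw [if_neg (Fin.succ_ne_zero k), one_mul, innerS k]
  rw [Fin.sum_univ_succ]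
  rw [show (if (0:Fin (M+2+1)) = 0 then -s else 1) = -s from if_pos rfl, inner0]
  rw [Finset.sum_congr rfl fun k _ => t2 k]
  rw [Finset.sum_const, Finset.card_univ, Fintype.card_fin, nsmul_eq_mul]
  push_cast
  rw [hs]
  have hm0 : (0:ℝ) < (M:ℝ)+2 := by positivity
  have hc2 : 1 ≤ ((M:ℝ)+2) * (ε/2)^2 := by nlinarith
  have h1 : ((M:ℝ)+2) ≤ ((M:ℝ)+2)^2 * (ε/2)^2 := by nlinarith
  have h2 : 0 ≤ ((M:ℝ)+2)^2 * (ε/2)^2 * T := by positivity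
  have h3 : 0 < ((M:ℝ)+2) * T := by positivity
  nlinarith [h1, h2, h3]

/-- For the total-variation generator `f(t) = (1/2)|t-1|`: for every
`δ > 0` there exists a `δ`-pairwise-weakly-dependent finite family whose `f`-MI matrix
is not positive semidefinite. -/
theorem stmt_17 :
    ∀ δ : ℝ, 0 < δ →
      ∃ (n : ℕ) (A : Fin n → Type) (inst : ∀ i, Fintype (A i))
        (P : (∀ i, A i) → ℝ),
        @IsJointPMF n A inst P ∧ @PosMarg n A inst P ∧ @WeakDep n A inst δ P ∧
        ¬ (@MIMat n A inst (fun t => (1 / 2) * |t - 1|) P).PosSemidef := by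
  intro δ hδ
  have hmin0 : 0 < min δ 1 := lt_min hδ one_pos
  set ε : ℝ := min δ 1 / 2 with hεdef
  have hε0 : 0 < ε := by positivity
  have hεδ : ε < δ := by
    have h1 : min δ 1 ≤ δ := min_le_left δ 1
    rw [hεdef]; linarith
  have hε1 : ε ≤ 1/2 := by
    have := min_le_right δ 1
    rw [hεdef]; linarith
  set M : ℕ := ⌈(4:ℝ)/ε^2⌉₊ with hMdef
  have hM4 : 4 ≤ ((M:ℝ)+2) * ε^2 := by
    have h1 : (4:ℝ)/ε^2 ≤ M := Nat.le_ceil _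
    have h2 : (0:ℝ) < ε^2 := by positivity
    have h3 : (4:ℝ) = (4/ε^2) * ε^2 := by field_simp
    nlinarith
  have hT0 : (0:ℝ) < (2:ℝ)⁻¹^(M+2) := by positivity
  have hT1 : (2:ℝ)⁻¹^(M+2) < 1 :=
    pow_lt_one₀ (by norm_num) (by norm_num) (by omega)
  refine ⟨M+2+1, fun _ => (Fin (M+2) → Bool), fun _ => inferInstance, PP (M+2) ε,
    ⟨?_, ?_⟩, ?_, ?_, ?_⟩
  · -- nonnegativity
    intro z
    unfold PP
    refine mul_nonneg (by positivity) (Finset.prod_nonneg fun i _ => ?_)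
    exact gg_nonneg (by rw [abs_of_nonneg hε0.le]; linarith) _ _
  · exact PP_total M ε
  · -- PosMarg
    intro i a
    rw [margAll M ε i a]
    exact hT0
  · -- WeakDep
    intro i j
    induction i using Fin.cases with
    | zero =>
      induction j using Fin.cases with
      | zero => exact fun hij => absurd rfl hij
      | succ l =>
        intro _ a b
        rw [margAll, margAll, pair_zero_succ M ε l a b,
          show (2:ℝ)⁻¹^(M+2) * (2:ℝ)⁻¹^(M+2) = ((2:ℝ)⁻¹^(M+2))^2 from (sq _).symm,
          mul_div_assoc, div_self (by positivity), mul_one]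
        constructor
        · split_ifs <;> linarith
        · split_ifs <;> linarith
    | succ k =>
      induction j using Fin.cases with
      | zero =>
        intro _ a b
        rw [margAll, margAll, pairMarg_symm, pair_zero_succ M ε k b a,
          show (2:ℝ)⁻¹^(M+2) * (2:ℝ)⁻¹^(M+2) = ((2:ℝ)⁻¹^(M+2))^2 from (sq _).symm,
          mul_div_assoc, div_self (by positivity), mul_one]
        constructor
        · split_ifs <;> linarith
        · split_ifs <;> linarith
      | succ l =>
        intro hij a b
        have hkl : k ≠ l := fun h => hij (by rw [h])
        rw [margAll, margAll, pair_succ_succ M ε k l hkl a b,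
          show (2:ℝ)⁻¹^(M+2) * (2:ℝ)⁻¹^(M+2) = ((2:ℝ)⁻¹^(M+2))^2 from (sq _).symm,
          div_self (by positivity)]
        constructor
        · linarith
        · linarith
  · -- not PosSemidef
    intro hPSD
    have entry : ∀ i j : Fin (M+2+1),
        MIMat (A := fun _ : Fin (M+2+1) => Fin (M+2) → Bool)
          (fun t => (1/2) * |t - 1|) (PP (M+2) ε) i j
        = (if i = j then 1 - (2:ℝ)⁻¹^(M+2) else if i = 0 ∨ j = 0 then ε/2 else 0) := by
      intro i j
      simp only [MIMat, Matrix.of_apply]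
      induction i using Fin.cases with
      | zero =>
        induction j using Fin.cases with
        | zero => rw [if_pos rfl]; exact fMI_diag M ε 0
        | succ l =>
          rw [if_neg (Fin.succ_ne_zero l).symm, if_pos (Or.inl rfl)]
          exact fMI_cross0 M ε hε0.le l
      | succ k =>
        induction j using Fin.cases with
        | zero =>
          rw [if_neg (Fin.succ_ne_zero k), if_pos (Or.inr rfl)]
          exact fMI_cross0' M ε hε0.le k
        | succ l =>
          rcases eq_or_ne k l with rfl | hkl
          · rw [if_pos rfl]; exact fMI_diag M ε k.succ
          · rw [if_neg (fun h => hkl (Fin.succ_injective _ h)),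
              if_neg (by push_neg; exact ⟨Fin.succ_ne_zero k, Fin.succ_ne_zero l⟩)]
            exact fMI_indep M ε k l hkl
    have hq := hPSD.dotProduct_mulVec_nonneg (fun i : Fin (M+2+1) => if i = 0 then -(((M:ℝ)+2)*(ε/2)) else 1)
    simp only [Matrix.mulVec, dotProduct, Pi.star_apply, star_trivial, entry] at hq
    have := quad_neg M ε hε0 hM4 ((2:ℝ)⁻¹^(M+2)) hT0
    linarith
end
end

section
/- For the Shannon generator f(t) = t·log t (with f(0) := 0): for every δ > 0 there exist n ∈ ℕ and a finite family of jointly distributed finitely-supported random variables (X₁,…,Xₙ) that is δ-pairwise-weakly-dependent but whose f-mutual-information matrix M^(f) with entries M^(f)_{ij} = I_f(p_{ij}) is not positive semidefinite. -/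
open scoped Classical

noncomputable section

set_option linter.unusedSectionVars false

namespace Aux18

open Finset

lemma sum_zmod2 (g : ZMod 2 → ℝ) : ∑ h, g h = g 0 + g 1 := by
  have h : (univ : Finset (ZMod 2)) = {0, 1} := by decide
  rw [h, Finset.sum_insert (by decide), Finset.sum_singleton]

lemma zmod2_cases (x : ZMod 2) : x = 0 ∨ x = 1 := by revert x; decide

section Fiber
variable {G H : Type} [Fintype G] [Fintype H] [DecidableEq H]
  [AddCommGroup G] [AddCommGroup H]

lemma fiber_card_const (φ : G →+ H) (hsur : Function.Surjective φ) (h : H) :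
    (univ.filter fun u => φ u = h).card = (univ.filter fun u => φ u = 0).card := by
  obtain ⟨d, hd⟩ := hsur h
  refine Finset.card_bij (fun u _ => u - d) ?_ ?_ ?_
  · intro a ha
    simp only [mem_filter, mem_univ, true_and] at ha ⊢
    rw [map_sub, ha, hd, sub_self]
  · intro a _ b _ hab
    have := congrArg (· + d) hab
    simpa using this
  · intro b hb
    simp only [mem_filter, mem_univ, true_and] at *
    exact ⟨b + d, by rw [map_add, hb, hd, zero_add], by abel⟩

lemma card_mul_fiber (φ : G →+ H) (hsur : Function.Surjective φ) :
    Fintype.card H * (univ.filter fun u => φ u = 0).card = Fintype.card G := by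
  have h1 : (univ : Finset G).card = ∑ h : H, (univ.filter fun u => φ u = h).card :=
    Finset.card_eq_sum_card_fiberwise (fun x _ => mem_univ _)
  have h2 : ∑ h : H, (univ.filter fun u => φ u = h).card
      = Fintype.card H * (univ.filter fun u => φ u = 0).card := by
    rw [Finset.sum_congr rfl (fun h _ => fiber_card_const φ hsur h), Finset.sum_const,
      smul_eq_mul, Finset.card_univ]
  rw [← h2, ← h1, Finset.card_univ]

lemma sum_comp_hom (φ : G →+ H) (hsur : Function.Surjective φ) (g : H → ℝ) :
    (Fintype.card H : ℝ) * ∑ u, g (φ u) = (Fintype.card G : ℝ) * ∑ h, g h := by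
  have h1 : ∑ u, g (φ u) = ∑ h : H, ∑ u ∈ univ.filter (fun u => φ u = h), g (φ u) :=
    (Finset.sum_fiberwise_of_maps_to (fun x _ => mem_univ _) _).symm
  have h2 : ∀ h : H, ∑ u ∈ univ.filter (fun u => φ u = h), g (φ u)
      = ((univ.filter fun u => φ u = 0).card : ℝ) * g h := by
    intro h
    rw [Finset.sum_congr rfl (fun u hu => by rw [(Finset.mem_filter.mp hu).2]),
      Finset.sum_const, fiber_card_const φ hsur h, nsmul_eq_mul]
  rw [h1, Finset.sum_congr rfl (fun h _ => h2 h), ← Finset.mul_sum, ← mul_assoc,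
    ← Nat.cast_mul, card_mul_fiber φ hsur]

end Fiber

section Main

variable (r : ℕ)

abbrev U := Fin (r + 2) → ZMod 2

lemma card_U : Fintype.card (U r) = 2 ^ (r + 2) := by
  simp [U]

def dotHom (v : U r) : U r →+ ZMod 2 :=
  AddMonoidHom.mk' (fun u => ∑ j, v j * u j) (by
    intro a b
    simp [Pi.add_apply, mul_add, Finset.sum_add_distrib])

lemma dotHom_single (v : U r) (j : Fin (r + 2)) :
    dotHom r v (Pi.single j 1) = v j := by
  simp only [dotHom, AddMonoidHom.mk'_apply]
  rw [Finset.sum_eq_single j]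
  · simp
  · intro b _ hb; simp [Pi.single_eq_of_ne hb]
  · simp

lemma dotHom_zero (u : U r) : dotHom r 0 u = 0 := by
  simp only [dotHom, AddMonoidHom.mk'_apply]
  simp

lemma dotHom_surj {v : U r} (hv : v ≠ 0) : Function.Surjective (dotHom r v) := by
  obtain ⟨j, hj⟩ : ∃ j, v j ≠ 0 := by
    by_contra h; push_neg at h; exact hv (funext fun j => h j)
  have hj1 : v j = 1 := ((zmod2_cases (v j)).resolve_left hj)
  intro h
  rcases zmod2_cases h with rfl | rfl
  · exact ⟨0, map_zero _⟩
  · exact ⟨Pi.single j 1, by rw [dotHom_single, hj1]⟩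

def pairHom (v v' : U r) : U r →+ ZMod 2 × ZMod 2 :=
  AddMonoidHom.mk' (fun u => (dotHom r v u, dotHom r v' u)) (by
    intro a b; simp [Prod.ext_iff])

lemma pairHom_apply (v v' u : U r) :
    pairHom r v v' u = (dotHom r v u, dotHom r v' u) := rfl

lemma zmod2_ne (a x : ZMod 2) (h : a ≠ x) : a = 1 + x := by
  revert a x; decide

lemma pairHom_surj {v v' : U r} (hv : v ≠ 0) (hv' : v' ≠ 0) (hne : v ≠ v') :
    Function.Surjective (pairHom r v v') := by
  obtain ⟨j, hj⟩ : ∃ j, v j ≠ v' j := Function.ne_iff.mp hne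
  obtain ⟨iv, hiv⟩ : ∃ i, v i = 1 := by
    obtain ⟨i, hi⟩ : ∃ i, v i ≠ 0 := by
      by_contra h; push_neg at h; exact hv (funext fun i => h i)
    exact ⟨i, (zmod2_cases (v i)).resolve_left hi⟩
  obtain ⟨iw, hiw⟩ : ∃ i, v' i = 1 := by
    obtain ⟨i, hi⟩ : ∃ i, v' i ≠ 0 := by
      by_contra h; push_neg at h; exact hv' (funext fun i => h i)
    exact ⟨i, (zmod2_cases (v' i)).resolve_left hi⟩
  rintro ⟨a, b⟩
  rcases zmod2_cases (v j) with h0 | h1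
  · -- v j = 0, v' j = 1
    have h1' : v' j = 1 := by
      rcases zmod2_cases (v' j) with h | h
      · exact absurd (h0.trans h.symm) hj
      · exact h
    -- φ (single j) = (0, 1), φ (single iv) = (1, v' iv)
    rcases zmod2_cases a with rfl | rfl
    · rcases zmod2_cases b with rfl | rfl
      · exact ⟨0, by simp [pairHom_apply, dotHom_zero]⟩
      · exact ⟨Pi.single j 1, by simp [pairHom_apply, dotHom_single, h0, h1']⟩
    · by_cases hb : b = v' iv
      · exact ⟨Pi.single iv 1, by simp [pairHom_apply, dotHom_single, hiv, hb]⟩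
      · refine ⟨Pi.single iv 1 + Pi.single j 1, ?_⟩
        rw [pairHom_apply, map_add, map_add, dotHom_single, dotHom_single,
          dotHom_single, dotHom_single, hiv, h0, h1']
        simp only [Prod.mk.injEq]
        exact ⟨by decide, by rw [zmod2_ne b (v' iv) hb]; ring⟩
  · -- v j = 1, so v' j = 0
    have h0' : v' j = 0 := by
      rcases zmod2_cases (v' j) with h | h
      · exact h
      · exact absurd (h1.trans h.symm) hj
    rcases zmod2_cases b with rfl | rfl
    · rcases zmod2_cases a with rfl | rfl
      · exact ⟨0, by simp [pairHom_apply, dotHom_zero]⟩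
      · exact ⟨Pi.single j 1, by simp [pairHom_apply, dotHom_single, h1, h0']⟩
    · by_cases ha : a = v iw
      · exact ⟨Pi.single iw 1, by simp [pairHom_apply, dotHom_single, hiw, ha]⟩
      · refine ⟨Pi.single iw 1 + Pi.single j 1, ?_⟩
        rw [pairHom_apply, map_add, map_add, dotHom_single, dotHom_single,
          dotHom_single, dotHom_single, hiw, h1, h0']
        simp only [Prod.mk.injEq]
        exact ⟨by rw [zmod2_ne a (v iw) ha]; ring, by decide⟩

lemma sum_U_eval (g : ZMod 2 → ℝ) :
    ∑ y : U r, g (y 0) = 2 ^ (r + 1) * (g 0 + g 1) := by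
  have hsur : Function.Surjective (AddMonoidHom.mk' (fun y : U r => y 0) (fun a b => rfl)) :=
    fun h => ⟨fun _ => h, rfl⟩
  have key := sum_comp_hom (AddMonoidHom.mk' (fun y : U r => y 0) (fun a b => rfl)) hsur g
  rw [card_U, sum_zmod2] at key
  simp only [AddMonoidHom.mk'_apply, ZMod.card] at key
  push_cast at key
  have h2 : ((2 : ℝ) ^ (r + 2) : ℝ) = 2 * 2 ^ (r + 1) := by ring
  rw [h2] at key
  have hkey : (2:ℝ) * ∑ y : U r, g (y 0) = 2 * 2 ^ (r + 1) * (g 0 + g 1) := key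
  linarith

lemma sum_U_dot {v : U r} (hv : v ≠ 0) (g : ZMod 2 → ℝ) :
    ∑ u : U r, g (dotHom r v u) = 2 ^ (r + 1) * (g 0 + g 1) := by
  have key := sum_comp_hom (dotHom r v) (dotHom_surj r hv) g
  rw [card_U, sum_zmod2] at key
  simp only [ZMod.card] at key
  push_cast at key
  have h2 : ((2 : ℝ) ^ (r + 2) : ℝ) = 2 * 2 ^ (r + 1) := by ring
  rw [h2] at key
  linarith

lemma sum_U_pair {v v' : U r} (hv : v ≠ 0) (hv' : v' ≠ 0) (hne : v ≠ v')
    (g : ZMod 2 → ZMod 2 → ℝ) :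
    ∑ u : U r, g (dotHom r v u) (dotHom r v' u)
      = 2 ^ r * ((g 0 0 + g 0 1) + (g 1 0 + g 1 1)) := by
  have key := sum_comp_hom (pairHom r v v') (pairHom_surj r hv hv' hne)
    (fun p => g p.1 p.2)
  rw [card_U] at key
  simp only [Fintype.card_prod, ZMod.card, pairHom_apply] at key
  have hsum : ∑ p : ZMod 2 × ZMod 2, g p.1 p.2 = (g 0 0 + g 0 1) + (g 1 0 + g 1 1) := by
    rw [Fintype.sum_prod_type]
    rw [sum_zmod2 (fun c => ∑ d, g c d), sum_zmod2 (g 0), sum_zmod2 (g 1)]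
  rw [hsum] at key
  push_cast at key
  have h4 : ((2 : ℝ) ^ (r + 2) : ℝ) = (2 * 2) * 2 ^ r := by ring
  rw [h4] at key
  linarith


variable (θ : ℝ)

def w (c d : ZMod 2) : ℝ := if c = d then (1 + θ) / 2 else (1 - θ) / 2

lemma w_pos (hθ0 : 0 < θ) (hθ1 : θ < 1) (c d : ZMod 2) : 0 < w θ c d := by
  unfold w; split <;> linarith

lemma w_right_sum (c : ZMod 2) : w θ c 0 + w θ c 1 = 1 := by
  rcases zmod2_cases c with rfl | rfl <;>
    simp [w, show (0 : ZMod 2) ≠ 1 by decide, show (1 : ZMod 2) ≠ 0 by decide] <;> ring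

lemma w_left_sum (c : ZMod 2) : w θ 0 c + w θ 1 c = 1 := by
  rcases zmod2_cases c with rfl | rfl <;>
    simp [w, show (0 : ZMod 2) ≠ 1 by decide, show (1 : ZMod 2) ≠ 0 by decide] <;> ring

def q (v u y : U r) : ℝ := ((2 : ℝ) ^ (r + 1))⁻¹ * w θ (y 0) (dotHom r v u)

lemma two_pow_ne (k : ℕ) : ((2 : ℝ) ^ k) ≠ 0 := by positivity

lemma sum_q (v u : U r) : ∑ y : U r, q r θ v u y = 1 := by
  unfold q
  rw [← Finset.mul_sum, sum_U_eval r (fun c => w θ c (dotHom r v u)), w_left_sum,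
    mul_one, inv_mul_cancel₀ (two_pow_ne _)]

lemma sum_q_u {v : U r} (hv : v ≠ 0) (b : U r) : ∑ u : U r, q r θ v u b = 1 := by
  unfold q
  rw [← Finset.mul_sum, sum_U_dot r hv (fun d => w θ (b 0) d), w_right_sum,
    mul_one, inv_mul_cancel₀ (two_pow_ne _)]

lemma sum_q_zero_u (b : U r) : ∑ u : U r, q r θ 0 u b = 2 * w θ (b 0) 0 := by
  unfold q
  rw [Finset.sum_congr rfl (fun u _ => by rw [dotHom_zero]), Finset.sum_const,
    Finset.card_univ, card_U, nsmul_eq_mul]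
  push_cast
  have h : ((2 : ℝ) ^ (r + 2)) = 2 * 2 ^ (r + 1) := by ring
  rw [h, mul_assoc, ← mul_assoc ((2:ℝ)^(r+1)), mul_inv_cancel₀ (two_pow_ne _), one_mul]

/-- enumeration of `U r` -/
def ee : Fin (2 ^ (r + 2)) ≃ U r := (Fintype.equivFinOfCardEq (card_U r)).symm

/-- the joint distribution -/
def Pdist : (Fin (2 ^ (r + 2) + 1) → U r) → ℝ := fun x =>
  ((2 : ℝ) ^ (r + 2))⁻¹ * ∏ i, q r θ (ee r i) (x 0) (x i.succ)

lemma sum_split {M : ℕ} {α : Type} [Fintype α] (g : α → ℝ) (h : Fin M → α → α → ℝ) :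
    ∑ x : Fin (M + 1) → α, g (x 0) * ∏ i, h i (x 0) (x i.succ)
      = ∑ u, g u * ∏ i, ∑ y, h i u y := by
  rw [← Equiv.sum_comp (Fin.consEquiv (fun _ : Fin (M + 1) => α))
      (fun x => g (x 0) * ∏ i, h i (x 0) (x i.succ))]
  rw [Fintype.sum_prod_type]
  refine Finset.sum_congr rfl fun u _ => ?_
  have hc : ∀ p : Fin M → α, (Fin.consEquiv (fun _ : Fin (M + 1) => α)) (u, p) = Fin.cons u p :=
    fun p => rfl
  simp only [hc, Fin.cons_zero, Fin.cons_succ]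
  rw [← Finset.mul_sum]
  congr 1
  rw [← Fintype.piFinset_univ, ← Finset.prod_univ_sum]

/-- master computation: expectation of a product of single-coordinate weights -/
lemma sum_ind (F : U r → ℝ) (G : Fin (2 ^ (r + 2)) → U r → ℝ) :
    ∑ x : Fin (2 ^ (r + 2) + 1) → U r, (F (x 0) * ∏ i, G i (x i.succ)) * Pdist r θ x
      = ((2 : ℝ) ^ (r + 2))⁻¹ * ∑ u, F u * ∏ i, ∑ y, G i y * q r θ (ee r i) u y := by
  have step1 : ∀ x : Fin (2 ^ (r + 2) + 1) → U r,
      (F (x 0) * ∏ i, G i (x i.succ)) * Pdist r θ x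
        = (((2 : ℝ) ^ (r + 2))⁻¹ * F (x 0))
            * ∏ i, (G i (x i.succ) * q r θ (ee r i) (x 0) (x i.succ)) := by
    intro x
    unfold Pdist
    rw [Finset.prod_mul_distrib]
    ring
  refine Eq.trans (Finset.sum_congr rfl fun x _ => step1 x) ?_
  refine Eq.trans (sum_split (g := fun u => ((2 : ℝ) ^ (r + 2))⁻¹ * F u)
    (h := fun i u y => G i y * q r θ (ee r i) u y)) ?_
  rw [Finset.mul_sum]
  exact Finset.sum_congr rfl fun u _ => by ring

lemma prod_ite_two {β : Type} [Fintype β] [DecidableEq β] {i₀ i₁ : β} (hne : i₀ ≠ i₁)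
    (A B : ℝ) :
    ∏ i, (if i = i₀ then A else if i = i₁ then B else 1) = A * B := by
  have key : ∀ i, (if i = i₀ then A else if i = i₁ then B else 1)
      = (if i = i₀ then A else 1) * (if i = i₁ then B else 1) := by
    intro i
    by_cases h0 : i = i₀
    · subst h0
      simp [hne]
    · by_cases h1 : i = i₁
      · subst h1; simp [h0]
      · simp [h0, h1]
  rw [Finset.prod_congr rfl fun i _ => key i, Finset.prod_mul_distrib,
    Finset.prod_ite_eq' univ i₀ (fun _ => A), Finset.prod_ite_eq' univ i₁ (fun _ => B)]
  simp

lemma Pdist_sum : ∑ x, Pdist r θ x = 1 := by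
  have key : ∀ x : Fin (2 ^ (r + 2) + 1) → U r,
      Pdist r θ x = ((1 : ℝ) * ∏ i : Fin (2 ^ (r + 2)), (1 : ℝ)) * Pdist r θ x := by
    intro x; simp
  refine Eq.trans (Finset.sum_congr rfl fun x _ => key x) ?_
  refine Eq.trans (sum_ind r θ (fun _ => 1) (fun _ _ => 1)) ?_
  have h1 : ∀ u : U r, (1 : ℝ) * ∏ i : Fin (2 ^ (r + 2)), ∑ y, 1 * q r θ (ee r i) u y = 1 := by
    intro u
    rw [one_mul, Finset.prod_congr rfl fun i _ => by rw [Finset.sum_congr rfl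
      fun y _ => one_mul _, sum_q r θ _ u], Finset.prod_const_one]
  rw [Finset.sum_congr rfl fun u _ => h1 u, Finset.sum_const, Finset.card_univ, card_U,
    nsmul_eq_mul, mul_one]
  push_cast
  exact inv_mul_cancel₀ (two_pow_ne _)

lemma marg_zero (a : U r) : marg (Pdist r θ) 0 a = ((2 : ℝ) ^ (r + 2))⁻¹ := by
  unfold marg
  have key : ∀ x : Fin (2 ^ (r + 2) + 1) → U r,
      (@ite ℝ (x 0 = a) (Classical.propDecidable _) (Pdist r θ x) 0)
        = ((if x 0 = a then (1 : ℝ) else 0) * ∏ i : Fin (2 ^ (r + 2)), (1 : ℝ))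
            * Pdist r θ x := by
    intro x; by_cases hx : x 0 = a <;> simp [hx]
  refine Eq.trans (Finset.sum_congr rfl fun x _ => key x) ?_
  refine Eq.trans (sum_ind r θ (fun u => if u = a then 1 else 0) (fun _ _ => 1)) ?_
  have h1 : ∀ u : U r, (if u = a then (1 : ℝ) else 0)
      * ∏ i : Fin (2 ^ (r + 2)), ∑ y, 1 * q r θ (ee r i) u y
      = (if u = a then (1 : ℝ) else 0) := by
    intro u
    rw [Finset.prod_congr rfl fun i _ => by rw [Finset.sum_congr rfl
      fun y _ => one_mul _, sum_q r θ _ u], Finset.prod_const_one, mul_one]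
  rw [Finset.sum_congr rfl fun u _ => h1 u, Finset.sum_ite_eq' univ a fun _ => (1 : ℝ)]
  simp

lemma marg_succ (i₀ : Fin (2 ^ (r + 2))) (b : U r) :
    marg (Pdist r θ) i₀.succ b = ((2 : ℝ) ^ (r + 2))⁻¹ * ∑ u, q r θ (ee r i₀) u b := by
  unfold marg
  have key : ∀ x : Fin (2 ^ (r + 2) + 1) → U r,
      (@ite ℝ (x i₀.succ = b) (Classical.propDecidable _) (Pdist r θ x) 0)
        = ((1 : ℝ) * ∏ i, (if i = i₀ then (if x i.succ = b then (1 : ℝ) else 0) else 1))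
            * Pdist r θ x := by
    intro x
    rw [Finset.prod_ite_eq' univ i₀ (fun i => if x i.succ = b then (1 : ℝ) else 0)]
    by_cases hx : x i₀.succ = b <;> simp [hx]
  refine Eq.trans (Finset.sum_congr rfl fun x _ => key x) ?_
  refine Eq.trans (sum_ind r θ (fun _ => 1)
    (fun i y => if i = i₀ then (if y = b then 1 else 0) else 1)) ?_
  have h1 : ∀ u : U r, ∀ i : Fin (2 ^ (r + 2)),
      ∑ y, (if i = i₀ then (if y = b then (1 : ℝ) else 0) else 1) * q r θ (ee r i) u y
        = if i = i₀ then q r θ (ee r i₀) u b else 1 := by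
    intro u i
    by_cases hi : i = i₀
    · subst hi
      simp only [eq_self_iff_true, if_true]
      have : ∀ y : U r, (if y = b then (1 : ℝ) else 0) * q r θ (ee r i) u y
          = if y = b then q r θ (ee r i) u y else 0 := by
        intro y; by_cases hy : y = b <;> simp [hy]
      rw [Finset.sum_congr rfl fun y _ => this y,
        Finset.sum_ite_eq' univ b fun y => q r θ (ee r i) u y]
      simp
    · rw [if_neg hi]
      simp only [if_neg hi, one_mul]
      exact sum_q r θ _ u
  have h2 : ∀ u : U r,
      (1 : ℝ) * ∏ i, ∑ y, (if i = i₀ then (if y = b then (1 : ℝ) else 0) else 1)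
        * q r θ (ee r i) u y = q r θ (ee r i₀) u b := by
    intro u
    rw [one_mul, Finset.prod_congr rfl fun i _ => h1 u i,
      Finset.prod_ite_eq' univ i₀ fun _ => q r θ (ee r i₀) u b]
    simp
  rw [Finset.sum_congr rfl fun u _ => h2 u]

lemma pairMarg_hub_leaf (i₀ : Fin (2 ^ (r + 2))) (a b : U r) :
    pairMarg (Pdist r θ) 0 i₀.succ a b = ((2 : ℝ) ^ (r + 2))⁻¹ * q r θ (ee r i₀) a b := by
  unfold pairMarg
  have key : ∀ x : Fin (2 ^ (r + 2) + 1) → U r,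
      (@ite ℝ (x 0 = a ∧ x i₀.succ = b)
          (@instDecidableAnd _ _ (Classical.propDecidable _) (Classical.propDecidable _))
          (Pdist r θ x) 0)
        = ((if x 0 = a then (1 : ℝ) else 0)
            * ∏ i, (if i = i₀ then (if x i.succ = b then (1 : ℝ) else 0) else 1))
            * Pdist r θ x := by
    intro x
    rw [Finset.prod_ite_eq' univ i₀ (fun i => if x i.succ = b then (1 : ℝ) else 0)]
    by_cases hx : x 0 = a <;> by_cases hy : x i₀.succ = b <;> simp [hx, hy]
  refine Eq.trans (Finset.sum_congr rfl fun x _ => key x) ?_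
  refine Eq.trans (sum_ind r θ (fun u => if u = a then 1 else 0)
    (fun i y => if i = i₀ then (if y = b then 1 else 0) else 1)) ?_
  have h1 : ∀ u : U r, ∀ i : Fin (2 ^ (r + 2)),
      ∑ y, (if i = i₀ then (if y = b then (1 : ℝ) else 0) else 1) * q r θ (ee r i) u y
        = if i = i₀ then q r θ (ee r i₀) u b else 1 := by
    intro u i
    by_cases hi : i = i₀
    · subst hi
      simp only [eq_self_iff_true, if_true]
      have : ∀ y : U r, (if y = b then (1 : ℝ) else 0) * q r θ (ee r i) u y
          = if y = b then q r θ (ee r i) u y else 0 := by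
        intro y; by_cases hy : y = b <;> simp [hy]
      rw [Finset.sum_congr rfl fun y _ => this y,
        Finset.sum_ite_eq' univ b fun y => q r θ (ee r i) u y]
      simp
    · rw [if_neg hi]
      simp only [if_neg hi, one_mul]
      exact sum_q r θ _ u
  have h2 : ∀ u : U r,
      (if u = a then (1 : ℝ) else 0) * ∏ i, ∑ y,
          (if i = i₀ then (if y = b then (1 : ℝ) else 0) else 1) * q r θ (ee r i) u y
        = if u = a then q r θ (ee r i₀) u b else 0 := by
    intro u
    rw [Finset.prod_congr rfl fun i _ => h1 u i,
      Finset.prod_ite_eq' univ i₀ fun _ => q r θ (ee r i₀) u b]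
    by_cases hu : u = a <;> simp [hu]
  rw [Finset.sum_congr rfl fun u _ => h2 u,
    Finset.sum_ite_eq' univ a fun u => q r θ (ee r i₀) u b]
  simp

lemma pairMarg_leaf_leaf {i₀ i₁ : Fin (2 ^ (r + 2))} (hne : i₀ ≠ i₁) (a b : U r) :
    pairMarg (Pdist r θ) i₀.succ i₁.succ a b
      = ((2 : ℝ) ^ (r + 2))⁻¹ * ∑ u, q r θ (ee r i₀) u a * q r θ (ee r i₁) u b := by
  unfold pairMarg
  have key : ∀ x : Fin (2 ^ (r + 2) + 1) → U r,
      (@ite ℝ (x i₀.succ = a ∧ x i₁.succ = b)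
          (@instDecidableAnd _ _ (Classical.propDecidable _) (Classical.propDecidable _))
          (Pdist r θ x) 0)
        = ((1 : ℝ) * ∏ i, ((if i = i₀ then (if x i.succ = a then (1 : ℝ) else 0) else 1)
            * (if i = i₁ then (if x i.succ = b then (1 : ℝ) else 0) else 1)))
            * Pdist r θ x := by
    intro x
    rw [Finset.prod_mul_distrib,
      Finset.prod_ite_eq' univ i₀ (fun i => if x i.succ = a then (1 : ℝ) else 0),
      Finset.prod_ite_eq' univ i₁ (fun i => if x i.succ = b then (1 : ℝ) else 0)]
    by_cases hx : x i₀.succ = a <;> by_cases hy : x i₁.succ = b <;> simp [hx, hy]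
  refine Eq.trans (Finset.sum_congr rfl fun x _ => key x) ?_
  refine Eq.trans (sum_ind r θ (fun _ => 1)
    (fun i y => (if i = i₀ then (if y = a then 1 else 0) else 1)
      * (if i = i₁ then (if y = b then 1 else 0) else 1))) ?_
  have h1 : ∀ u : U r, ∀ i : Fin (2 ^ (r + 2)),
      ∑ y, ((if i = i₀ then (if y = a then (1 : ℝ) else 0) else 1)
          * (if i = i₁ then (if y = b then (1 : ℝ) else 0) else 1)) * q r θ (ee r i) u y
        = if i = i₀ then q r θ (ee r i₀) u a else
            if i = i₁ then q r θ (ee r i₁) u b else 1 := by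
    intro u i
    by_cases h0 : i = i₀
    · subst h0
      simp only [eq_self_iff_true, if_true]
      have key2 : ∀ y : U r, ((if y = a then (1 : ℝ) else 0)
          * (if i = i₁ then (if y = b then (1 : ℝ) else 0) else 1)) * q r θ (ee r i) u y
          = if y = a then q r θ (ee r i) u y else 0 := by
        intro y
        rw [if_neg hne]
        by_cases hy : y = a <;> simp [hy]
      rw [Finset.sum_congr rfl fun y _ => key2 y,
        Finset.sum_ite_eq' univ a fun y => q r θ (ee r i) u y]
      simp
    · rw [if_neg h0]
      by_cases h1 : i = i₁
      · subst h1
        simp only [eq_self_iff_true, if_true]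
        have key2 : ∀ y : U r, ((if i = i₀ then (if y = a then (1 : ℝ) else 0) else 1)
            * (if y = b then (1 : ℝ) else 0)) * q r θ (ee r i) u y
            = if y = b then q r θ (ee r i) u y else 0 := by
          intro y
          rw [if_neg h0]
          by_cases hy : y = b <;> simp [hy]
        rw [Finset.sum_congr rfl fun y _ => key2 y,
          Finset.sum_ite_eq' univ b fun y => q r θ (ee r i) u y]
        simp
      · rw [if_neg h1]
        have key2 : ∀ y : U r, ((if i = i₀ then (if y = a then (1 : ℝ) else 0) else 1)
            * (if i = i₁ then (if y = b then (1 : ℝ) else 0) else 1)) * q r θ (ee r i) u y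
            = q r θ (ee r i) u y := by
          intro y
          rw [if_neg h0, if_neg h1, one_mul, one_mul]
        rw [Finset.sum_congr rfl fun y _ => key2 y]
        exact sum_q r θ _ u
  have h2 : ∀ u : U r,
      (1 : ℝ) * ∏ i, ∑ y, ((if i = i₀ then (if y = a then (1 : ℝ) else 0) else 1)
          * (if i = i₁ then (if y = b then (1 : ℝ) else 0) else 1)) * q r θ (ee r i) u y
        = q r θ (ee r i₀) u a * q r θ (ee r i₁) u b := by
    intro u
    rw [one_mul, Finset.prod_congr rfl fun i _ => h1 u i, prod_ite_two hne]
  rw [Finset.sum_congr rfl fun u _ => h2 u]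

lemma pairMarg_diag {n : ℕ} {A : Fin n → Type} [∀ i, Fintype (A i)]
    (P : (∀ i, A i) → ℝ) (i : Fin n) (a b : A i) :
    pairMarg P i i a b = if a = b then marg P i a else 0 := by
  unfold pairMarg marg
  by_cases hab : a = b
  · subst hab
    rw [if_pos rfl]
    exact Finset.sum_congr rfl fun x _ => if_congr (and_iff_left_of_imp fun h => h) rfl rfl
  · rw [if_neg hab]
    refine Finset.sum_eq_zero fun x _ => ?_
    rw [if_neg]
    rintro ⟨h1, h2⟩
    exact hab (h1.symm.trans h2)

lemma pairMarg_swap {n : ℕ} {A : Fin n → Type} [∀ i, Fintype (A i)]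
    (P : (∀ i, A i) → ℝ) (i j : Fin n) (a : A i) (b : A j) :
    pairMarg P j i b a = pairMarg P i j a b := by
  unfold pairMarg
  exact Finset.sum_congr rfl fun x _ => if_congr and_comm rfl rfl

lemma fMI_transpose (f : ℝ → ℝ) {A B : Type} [Fintype A] [Fintype B] (p : A → B → ℝ) :
    fMI f (fun b a => p a b) = fMI f p := by
  unfold fMI mfst msnd
  rw [Finset.sum_comm]
  refine Finset.sum_congr rfl fun y _ => Finset.sum_congr rfl fun x _ => ?_
  congr 1
  · exact mul_comm _ _
  · congr 1
    rw [mul_comm]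

lemma marg_succ_nonzero {i₀ : Fin (2 ^ (r + 2))} (hv : ee r i₀ ≠ 0) (b : U r) :
    marg (Pdist r θ) i₀.succ b = ((2 : ℝ) ^ (r + 2))⁻¹ := by
  rw [marg_succ, sum_q_u r θ hv b, mul_one]

lemma marg_succ_zero {i₀ : Fin (2 ^ (r + 2))} (hv : ee r i₀ = 0) (b : U r) :
    marg (Pdist r θ) i₀.succ b = ((2 : ℝ) ^ (r + 2))⁻¹ * (2 * w θ (b 0) 0) := by
  rw [marg_succ, hv, sum_q_zero_u]

lemma pow_split : ((2 : ℝ) ^ (r + 2)) = 2 * 2 ^ (r + 1) := by ring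

lemma qq_sum {v v' : U r} (hv : v ≠ 0) (hv' : v' ≠ 0) (hne : v ≠ v') (a b : U r) :
    ∑ u, q r θ v u a * q r θ v' u b = ((2 : ℝ) ^ (r + 2))⁻¹ := by
  have step1 : ∑ u, q r θ v u a * q r θ v' u b
      = ((2 : ℝ) ^ (r + 1))⁻¹ * (((2 : ℝ) ^ (r + 1))⁻¹
          * ∑ u, (fun c d => w θ (a 0) c * w θ (b 0) d) (dotHom r v u) (dotHom r v' u)) := by
    rw [Finset.mul_sum, Finset.mul_sum]
    exact Finset.sum_congr rfl fun u _ => by unfold q; ring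
  rw [step1, sum_U_pair r hv hv' hne (fun c d => w θ (a 0) c * w θ (b 0) d)]
  have step2 : (fun c d => w θ (a 0) c * w θ (b 0) d) 0 0
        + (fun c d => w θ (a 0) c * w θ (b 0) d) 0 1
      + ((fun c d => w θ (a 0) c * w θ (b 0) d) 1 0
        + (fun c d => w θ (a 0) c * w θ (b 0) d) 1 1)
      = (w θ (a 0) 0 + w θ (a 0) 1) * (w θ (b 0) 0 + w θ (b 0) 1) := by ring
  rw [step2, w_right_sum, w_right_sum, mul_one]
  rw [pow_succ, pow_succ, pow_succ]
  have hx : ((2 : ℝ) ^ r) ≠ 0 := two_pow_ne r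
  field_simp

lemma q_zero_left_sum {v' : U r} (hv' : v' ≠ 0) (a b : U r) :
    ∑ u, q r θ 0 u a * q r θ v' u b = ((2 : ℝ) ^ (r + 1))⁻¹ * w θ (a 0) 0 := by
  have step1 : ∀ u : U r, q r θ 0 u a * q r θ v' u b
      = (((2 : ℝ) ^ (r + 1))⁻¹ * w θ (a 0) 0) * q r θ v' u b := by
    intro u
    unfold q
    rw [dotHom_zero]
  rw [Finset.sum_congr rfl fun u _ => step1 u, ← Finset.mul_sum, sum_q_u r θ hv' b, mul_one]

lemma q_zero_right_sum {v : U r} (hv : v ≠ 0) (a b : U r) :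
    ∑ u, q r θ v u a * q r θ 0 u b = ((2 : ℝ) ^ (r + 1))⁻¹ * w θ (b 0) 0 := by
  have step1 : ∀ u : U r, q r θ v u a * q r θ 0 u b
      = (((2 : ℝ) ^ (r + 1))⁻¹ * w θ (b 0) 0) * q r θ v u a := by
    intro u
    unfold q
    rw [dotHom_zero]
    ring
  rw [Finset.sum_congr rfl fun u _ => step1 u, ← Finset.mul_sum, sum_q_u r θ hv a, mul_one]

/-- the Shannon generator -/
abbrev sh : ℝ → ℝ := fun t => t * Real.log t

def mth : ℝ := ((1 + θ) * Real.log (1 + θ) + (1 - θ) * Real.log (1 - θ)) / 2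

lemma mth_pos (hθ0 : 0 < θ) (hθ1 : θ < 1) : 0 < mth θ := by
  have h1 : Real.log (1 + θ) > θ / (1 + θ) := by
    have := Real.add_one_le_exp (θ / (1 + θ))
    have hlt : Real.log (1 / (1 + θ)) < 1 / (1 + θ) - 1 :=
      Real.log_lt_sub_one_of_pos (div_pos one_pos (by linarith)) (by
        intro h
        have h' : (1 : ℝ) = 1 + θ := by
          field_simp at h
          linarith
        linarith)
    rw [Real.log_div one_ne_zero (by linarith), Real.log_one] at hlt
    have : 1 / (1 + θ) - 1 = -(θ / (1 + θ)) := by field_simp; ring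
    rw [this] at hlt
    linarith
  have h2 : Real.log (1 - θ) ≥ -(θ / (1 - θ)) := by
    have hlt : Real.log (1 / (1 - θ)) ≤ 1 / (1 - θ) - 1 :=
      Real.log_le_sub_one_of_pos (div_pos one_pos (by linarith))
    rw [Real.log_div one_ne_zero (by linarith), Real.log_one] at hlt
    have : 1 / (1 - θ) - 1 = θ / (1 - θ) := by
      rw [div_sub_one (by linarith : (1 : ℝ) - θ ≠ 0)]
      congr 1
      ring
    rw [this] at hlt
    linarith
  have e1 : (1 + θ) * (θ / (1 + θ)) = θ := by
    rw [mul_comm]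
    exact div_mul_cancel₀ θ (by linarith)
  have e2 : (1 - θ) * (θ / (1 - θ)) = θ := by
    rw [mul_comm]
    exact div_mul_cancel₀ θ (by linarith)
  have big : (1 + θ) * Real.log (1 + θ) > θ := by
    calc (1 + θ) * Real.log (1 + θ) > (1 + θ) * (θ / (1 + θ)) := by
          apply mul_lt_mul_of_pos_left h1 (by linarith)
      _ = θ := e1
  have small : (1 - θ) * Real.log (1 - θ) ≥ -θ := by
    calc (1 - θ) * Real.log (1 - θ) ≥ (1 - θ) * (-(θ / (1 - θ))) := by
          apply mul_le_mul_of_nonneg_left h2 (by linarith)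
      _ = -θ := by rw [mul_neg, e2]
  unfold mth
  linarith

lemma wf_sum (x : ZMod 2) :
    sh (2 * w θ 0 x) + sh (2 * w θ 1 x) = 2 * mth θ := by
  rcases zmod2_cases x with rfl | rfl
  · rw [show w θ 0 0 = (1 + θ) / 2 from if_pos rfl,
      show w θ 1 0 = (1 - θ) / 2 from if_neg (by decide),
      show 2 * ((1 + θ) / 2) = 1 + θ from by ring,
      show 2 * ((1 - θ) / 2) = 1 - θ from by ring]
    unfold sh mth
    ring
  · rw [show w θ 0 1 = (1 - θ) / 2 from if_neg (by decide),
      show w θ 1 1 = (1 + θ) / 2 from if_pos rfl,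
      show 2 * ((1 - θ) / 2) = 1 - θ from by ring,
      show 2 * ((1 + θ) / 2) = 1 + θ from by ring]
    unfold sh mth
    ring

lemma fMI_diag_unif (p : U r → U r → ℝ)
    (hp : ∀ a b, p a b = if a = b then ((2 : ℝ) ^ (r + 2))⁻¹ else 0) :
    fMI sh p = (r + 2) * Real.log 2 := by
  have hfst : ∀ a, mfst p a = ((2 : ℝ) ^ (r + 2))⁻¹ := by
    intro a
    unfold mfst
    rw [Finset.sum_congr rfl fun b _ => hp a b,
      Finset.sum_ite_eq univ a fun _ => ((2 : ℝ) ^ (r + 2))⁻¹]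
    simp
  have hsnd : ∀ b, msnd p b = ((2 : ℝ) ^ (r + 2))⁻¹ := by
    intro b
    unfold msnd
    rw [Finset.sum_congr rfl fun a _ => hp a b,
      Finset.sum_ite_eq' univ b fun _ => ((2 : ℝ) ^ (r + 2))⁻¹]
    simp
  have key : ∀ a b : U r, mfst p a * msnd p b * sh (p a b / (mfst p a * msnd p b))
      = if a = b then ((2 : ℝ) ^ (r + 2))⁻¹ * ((2 : ℝ) ^ (r + 2))⁻¹
          * sh ((2 : ℝ) ^ (r + 2)) else 0 := by
    intro a b
    rw [hfst, hsnd, hp]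
    by_cases hab : a = b
    · rw [if_pos hab, if_pos hab]
      congr 1
      congr 1
      rw [show ((2:ℝ)^(r+2))⁻¹ / (((2:ℝ)^(r+2))⁻¹ * ((2:ℝ)^(r+2))⁻¹) = (2:ℝ)^(r+2) by
        field_simp]
    · rw [if_neg hab, if_neg hab]
      rw [zero_div]
      unfold sh
      rw [zero_mul, mul_zero]
  unfold fMI
  rw [Finset.sum_congr rfl fun a _ => Finset.sum_congr rfl fun b _ => key a b]
  rw [Finset.sum_congr rfl fun a _ => Finset.sum_ite_eq univ a
    fun _ => ((2 : ℝ) ^ (r + 2))⁻¹ * ((2 : ℝ) ^ (r + 2))⁻¹ * sh ((2 : ℝ) ^ (r + 2))]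
  simp only [Finset.mem_univ, if_true]
  rw [Finset.sum_const, Finset.card_univ, card_U, nsmul_eq_mul]
  unfold sh
  rw [Real.log_pow]
  push_cast
  field_simp

lemma entry_hub_hub : fMI sh (pairMarg (Pdist r θ) 0 0) = (r + 2) * Real.log 2 := by
  apply fMI_diag_unif
  intro a b
  rw [pairMarg_diag]
  by_cases hab : a = b <;> simp [hab, marg_zero]

lemma entry_leaf_diag {i₀ : Fin (2 ^ (r + 2))} (hv : ee r i₀ ≠ 0) :
    fMI sh (pairMarg (Pdist r θ) i₀.succ i₀.succ) = (r + 2) * Real.log 2 := by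
  apply fMI_diag_unif
  intro a b
  rw [pairMarg_diag]
  by_cases hab : a = b <;> simp [hab, marg_succ_nonzero r θ hv]

lemma entry_hub_leaf {i₀ : Fin (2 ^ (r + 2))} (hv : ee r i₀ ≠ 0) :
    fMI sh (pairMarg (Pdist r θ) 0 i₀.succ) = mth θ := by
  have hp : ∀ a b : U r, pairMarg (Pdist r θ) 0 i₀.succ a b
      = ((2 : ℝ) ^ (r + 2))⁻¹ * q r θ (ee r i₀) a b := pairMarg_hub_leaf r θ i₀
  have hfst : ∀ a, mfst (pairMarg (Pdist r θ) 0 i₀.succ) a = ((2 : ℝ) ^ (r + 2))⁻¹ := by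
    intro a
    unfold mfst
    rw [Finset.sum_congr rfl fun b _ => hp a b, ← Finset.mul_sum, sum_q r θ _ a, mul_one]
  have hsnd : ∀ b, msnd (pairMarg (Pdist r θ) 0 i₀.succ) b = ((2 : ℝ) ^ (r + 2))⁻¹ := by
    intro b
    unfold msnd
    rw [Finset.sum_congr rfl fun a _ => hp a b, ← Finset.mul_sum, sum_q_u r θ hv b, mul_one]
  have key : ∀ a b : U r,
      mfst (pairMarg (Pdist r θ) 0 i₀.succ) a * msnd (pairMarg (Pdist r θ) 0 i₀.succ) b
        * sh (pairMarg (Pdist r θ) 0 i₀.succ a b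
            / (mfst (pairMarg (Pdist r θ) 0 i₀.succ) a
              * msnd (pairMarg (Pdist r θ) 0 i₀.succ) b))
      = ((2 : ℝ) ^ (r + 2))⁻¹ * ((2 : ℝ) ^ (r + 2))⁻¹
          * sh (2 * w θ (b 0) (dotHom r (ee r i₀) a)) := by
    intro a b
    rw [hfst, hsnd, hp]
    congr 2
    unfold q
    rw [show ((2:ℝ)^(r+2))⁻¹ * (((2:ℝ)^(r+1))⁻¹ * w θ (b 0) (dotHom r (ee r i₀) a))
        / (((2:ℝ)^(r+2))⁻¹ * ((2:ℝ)^(r+2))⁻¹)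
        = ((2:ℝ)^(r+2) * ((2:ℝ)^(r+1))⁻¹) * w θ (b 0) (dotHom r (ee r i₀) a) by
      field_simp]
    rw [pow_split]
    rw [show 2 * (2:ℝ)^(r+1) * ((2:ℝ)^(r+1))⁻¹ = 2 by field_simp]
  unfold fMI
  rw [Finset.sum_congr rfl fun a _ => Finset.sum_congr rfl fun b _ => key a b]
  have inner : ∀ a : U r, ∑ b : U r, ((2 : ℝ) ^ (r + 2))⁻¹ * ((2 : ℝ) ^ (r + 2))⁻¹
      * sh (2 * w θ (b 0) (dotHom r (ee r i₀) a))
      = 2 ^ (r + 1) * (((2 : ℝ) ^ (r + 2))⁻¹ * ((2 : ℝ) ^ (r + 2))⁻¹ * (2 * mth θ)) := by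
    intro a
    rw [sum_U_eval r (fun d => ((2 : ℝ) ^ (r + 2))⁻¹ * ((2 : ℝ) ^ (r + 2))⁻¹
      * sh (2 * w θ d (dotHom r (ee r i₀) a)))]
    congr 1
    rw [← mul_add, wf_sum]
  rw [Finset.sum_congr rfl fun a _ => inner a, Finset.sum_const, Finset.card_univ, card_U,
    nsmul_eq_mul]
  push_cast
  rw [pow_split]
  field_simp

lemma entry_leaf_hub {i₀ : Fin (2 ^ (r + 2))} (hv : ee r i₀ ≠ 0) :
    fMI sh (pairMarg (Pdist r θ) i₀.succ 0) = mth θ := by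
  rw [show pairMarg (Pdist r θ) i₀.succ 0
      = (fun b a => pairMarg (Pdist r θ) 0 i₀.succ a b) from
    funext fun a => funext fun b => pairMarg_swap (Pdist r θ) 0 i₀.succ b a]
  rw [fMI_transpose]
  exact entry_hub_leaf r θ hv

lemma entry_leaf_leaf {i₀ i₁ : Fin (2 ^ (r + 2))} (hne : i₀ ≠ i₁)
    (hv : ee r i₀ ≠ 0) (hv' : ee r i₁ ≠ 0) :
    fMI sh (pairMarg (Pdist r θ) i₀.succ i₁.succ) = 0 := by
  have hvv : ee r i₀ ≠ ee r i₁ := fun h => hne ((ee r).injective h)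
  have hp : ∀ a b : U r, pairMarg (Pdist r θ) i₀.succ i₁.succ a b
      = ((2 : ℝ) ^ (r + 2))⁻¹ * ((2 : ℝ) ^ (r + 2))⁻¹ := by
    intro a b
    rw [pairMarg_leaf_leaf r θ hne, qq_sum r θ hv hv' hvv]
  have hfst : ∀ a, mfst (pairMarg (Pdist r θ) i₀.succ i₁.succ) a
      = ((2 : ℝ) ^ (r + 2))⁻¹ := by
    intro a
    unfold mfst
    rw [Finset.sum_congr rfl fun b _ => hp a b, Finset.sum_const, Finset.card_univ, card_U,
      nsmul_eq_mul]
    push_cast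
    field_simp
  have hsnd : ∀ b, msnd (pairMarg (Pdist r θ) i₀.succ i₁.succ) b
      = ((2 : ℝ) ^ (r + 2))⁻¹ := by
    intro b
    unfold msnd
    rw [Finset.sum_congr rfl fun a _ => hp a b, Finset.sum_const, Finset.card_univ, card_U,
      nsmul_eq_mul]
    push_cast
    field_simp
  unfold fMI
  refine Finset.sum_eq_zero fun a _ => Finset.sum_eq_zero fun b _ => ?_
  rw [hfst, hsnd, hp]
  rw [show ((2:ℝ)^(r+2))⁻¹ * ((2:ℝ)^(r+2))⁻¹ / (((2:ℝ)^(r+2))⁻¹ * ((2:ℝ)^(r+2))⁻¹)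
      = 1 by field_simp]
  unfold sh
  rw [Real.log_one, mul_zero, mul_zero]

lemma Pdist_pos (hθ0 : 0 < θ) (hθ1 : θ < 1) (x : Fin (2 ^ (r + 2) + 1) → U r) :
    0 < Pdist r θ x := by
  unfold Pdist
  apply mul_pos (by positivity)
  apply Finset.prod_pos
  intro i _
  unfold q
  exact mul_pos (by positivity) (w_pos θ hθ0 hθ1 _ _)

lemma marg_pos (hθ0 : 0 < θ) (hθ1 : θ < 1) (i : Fin (2 ^ (r + 2) + 1)) (a : U r) :
    0 < marg (Pdist r θ) i a := by
  have hconv : marg (Pdist r θ) i a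
      = ∑ x : Fin (2 ^ (r + 2) + 1) → U r, (if x i = a then Pdist r θ x else 0) := by
    unfold marg
    exact Finset.sum_congr rfl fun x _ => by by_cases hx : x i = a <;> simp [hx]
  rw [hconv]
  calc (0 : ℝ) < Pdist r θ (fun _ => a) := Pdist_pos r θ hθ0 hθ1 _
    _ = (if (fun _ : Fin (2 ^ (r + 2) + 1) => a) i = a
          then Pdist r θ (fun _ => a) else 0) := (if_pos rfl).symm
    _ ≤ ∑ x : Fin (2 ^ (r + 2) + 1) → U r, (if x i = a then Pdist r θ x else 0) := by
        apply Finset.single_le_sum (f := fun x : Fin (2 ^ (r + 2) + 1) → U r =>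
          if x i = a then Pdist r θ x else 0) (fun x _ => ?_) (Finset.mem_univ _)
        by_cases hx : x i = a
        · rw [if_pos hx]; exact le_of_lt (Pdist_pos r θ hθ0 hθ1 x)
        · rw [if_neg hx]

lemma card_nonzero :
    (univ.filter fun j : Fin (2 ^ (r + 2)) => ¬ (ee r j = 0)).card = 2 ^ (r + 2) - 1 := by
  have h1 : (univ.filter fun j : Fin (2 ^ (r + 2)) => ¬ (ee r j = 0))
      = univ \ {(ee r).symm 0} := by
    ext j
    simp [Equiv.eq_symm_apply, eq_comm]
  rw [h1, Finset.card_sdiff_of_subset (by simp), Finset.card_univ, Finset.card_singleton,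
    Fintype.card_fin]

end Main

lemma mem_ratio_one {x y δ : ℝ} (h : x = y) (hy : y ≠ 0) (hδ : 0 < δ) :
    x / y ∈ Set.Ioo (1 - δ) (1 + δ) := by
  rw [h, div_self hy]
  exact ⟨by linarith, by linarith⟩

lemma mem_ratio {x y ρ δ : ℝ} (h : x = ρ * y) (hy : y ≠ 0) (h1 : 1 - δ < ρ)
    (h2 : ρ < 1 + δ) : x / y ∈ Set.Ioo (1 - δ) (1 + δ) := by
  rw [h, mul_div_assoc, div_self hy, mul_one]
  exact ⟨h1, h2⟩

lemma cube_lt_two_pow (n : ℕ) (hn : 10 ≤ n) : n ^ 3 < 2 ^ n := by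
  induction n, hn using Nat.le_induction with
  | base => norm_num
  | succ n hn ih =>
    have k1 : 10 * n ^ 2 ≤ n ^ 3 := by
      calc 10 * n ^ 2 ≤ n * n ^ 2 := Nat.mul_le_mul_right _ hn
        _ = n ^ 3 := by ring
    have k2 : 3 * n + 1 ≤ n ^ 2 := by
      calc 3 * n + 1 ≤ 10 * n := by omega
        _ ≤ n * n := Nat.mul_le_mul_right _ hn
        _ = n ^ 2 := by ring
    have h1 : (n + 1) ^ 3 ≤ 2 * n ^ 3 := by nlinarith [k1, k2]
    calc (n + 1) ^ 3 ≤ 2 * n ^ 3 := h1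
      _ < 2 * 2 ^ n := by omega
      _ = 2 ^ (n + 1) := by rw [pow_succ]; ring

end Aux18


open Finset in
/-- For the Shannon generator `f(t) = t log t` (with `f(0) = 0`, which
holds automatically since `Real.log 0 = 0`): for every `δ > 0` there exists a
`δ`-pairwise-weakly-dependent finite family whose `f`-MI matrix is not positive
semidefinite. -/
theorem stmt_18 :
    ∀ δ : ℝ, 0 < δ →
      ∃ (n : ℕ) (A : Fin n → Type) (inst : ∀ i, Fintype (A i))
        (P : (∀ i, A i) → ℝ),
        @IsJointPMF n A inst P ∧ @PosMarg n A inst P ∧ @WeakDep n A inst δ P ∧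
        ¬ (@MIMat n A inst (fun t => t * Real.log t) P).PosSemidef := by
  intro δ hδ
  set θ : ℝ := min δ 1 / 2 with hθdef
  have hθ0 : 0 < θ := by
    rw [hθdef]; exact div_pos (lt_min hδ one_pos) two_pos
  have hθ1 : θ < 1 := by
    have h1 : min δ 1 ≤ 1 := min_le_right _ _
    rw [hθdef]; linarith
  have hθδ : θ < δ := by
    have h1 : min δ 1 ≤ δ := min_le_left _ _
    rw [hθdef]; linarith
  set m : ℝ := Aux18.mth θ with hmdef
  have hm : 0 < m := Aux18.mth_pos θ hθ0 hθ1
  set L : ℝ := Real.log 2 with hLdef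
  have hL : 0 < L := Real.log_pos one_lt_two
  obtain ⟨N₀, hN₀⟩ := exists_nat_gt (L ^ 2 / m ^ 2)
  set r : ℕ := max (N₀ + 2) 10 - 2 with hrdef
  have hs10 : 10 ≤ r + 2 := by
    have h1 : 10 ≤ max (N₀ + 2) 10 := le_max_right _ _
    omega
  have hsN : N₀ ≤ r := by
    have h1 : N₀ + 2 ≤ max (N₀ + 2) 10 := le_max_left _ _
    omega
  have hcube : (r + 2) ^ 3 < 2 ^ (r + 2) := Aux18.cube_lt_two_pow _ hs10
  set K : ℝ := 2 ^ (r + 2) - 1 with hKdef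
  have h2pow : (4 : ℝ) ≤ 2 ^ (r + 2) := by
    calc (4 : ℝ) = 2 ^ 2 := by norm_num
      _ ≤ 2 ^ (r + 2) := pow_le_pow_right₀ one_le_two (by omega)
  have hKpos : 0 < K := by rw [hKdef]; linarith
  set RL : ℝ := ((r : ℝ) + 2) * L with hRLdef
  have hRLpos : 0 < RL := by
    rw [hRLdef]; positivity
  have hbig : RL ^ 2 < K * m ^ 2 := by
    have h1 : L ^ 2 < N₀ * m ^ 2 := by
      have := (div_lt_iff₀ (by positivity : (0 : ℝ) < m ^ 2)).mp hN₀
      linarith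
    have hnat : (r + 2) ^ 2 * N₀ + 1 < 2 ^ (r + 2) := by
      have hsq : 1 ≤ (r + 2) ^ 2 := Nat.one_le_pow _ _ (by omega)
      have e1 : (r + 2) ^ 2 * N₀ + 1 ≤ (r + 2) ^ 2 * (N₀ + 1) := by nlinarith
      have e2 : (r + 2) ^ 2 * (N₀ + 1) ≤ (r + 2) ^ 3 := by
        have hle : N₀ + 1 ≤ r + 2 := by omega
        calc (r + 2) ^ 2 * (N₀ + 1) ≤ (r + 2) ^ 2 * (r + 2) := Nat.mul_le_mul_left _ hle
          _ = (r + 2) ^ 3 := by ring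
      omega
    have hcast : ((r : ℝ) + 2) ^ 2 * N₀ + 1 < 2 ^ (r + 2) := by
      have := hnat
      push_cast at this ⊢
      exact_mod_cast this
    have h5 : ((r : ℝ) + 2) ^ 2 * N₀ ≤ K := by rw [hKdef]; linarith
    have h3 : RL ^ 2 < ((r : ℝ) + 2) ^ 2 * (N₀ * m ^ 2) := by
      rw [hRLdef, mul_pow]
      apply mul_lt_mul_of_pos_left h1 (by positivity)
    have h4 : ((r : ℝ) + 2) ^ 2 * (N₀ * m ^ 2) ≤ K * m ^ 2 := by
      rw [show ((r : ℝ) + 2) ^ 2 * (N₀ * m ^ 2) = (((r : ℝ) + 2) ^ 2 * N₀) * m ^ 2 by ring]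
      exact mul_le_mul_of_nonneg_right h5 (by positivity)
    linarith
  refine ⟨2 ^ (r + 2) + 1, fun _ => Aux18.U r, fun _ => inferInstance, Aux18.Pdist r θ,
    ⟨?_, ?_⟩, ?_, ?_, ?_⟩
  · exact fun x => le_of_lt (Aux18.Pdist_pos r θ hθ0 hθ1 x)
  · exact Aux18.Pdist_sum r θ
  · show PosMarg (Aux18.Pdist r θ)
    exact fun i a => Aux18.marg_pos r θ hθ0 hθ1 i a
  · -- WeakDep
    show WeakDep δ (Aux18.Pdist r θ)
    intro i j hij a b
    have hc : (0 : ℝ) < ((2 : ℝ) ^ (r + 2))⁻¹ := by positivity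
    induction i using Fin.cases with
    | zero =>
      induction j using Fin.cases with
      | zero => exact absurd rfl hij
      | succ j0 =>
        by_cases hv : Aux18.ee r j0 = 0
        · rw [Aux18.pairMarg_hub_leaf, Aux18.marg_zero, Aux18.marg_succ_zero r θ hv]
          have hwpos := Aux18.w_pos θ hθ0 hθ1 (b 0) 0
          apply Aux18.mem_ratio_one _ _ hδ
          · unfold Aux18.q
            rw [hv, Aux18.dotHom_zero, Aux18.pow_split]
            field_simp
          · apply ne_of_gt
            apply mul_pos hc
            apply mul_pos hc
            linarith
        · rw [Aux18.pairMarg_hub_leaf, Aux18.marg_zero, Aux18.marg_succ_nonzero r θ hv]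
          apply Aux18.mem_ratio
            (ρ := 2 * Aux18.w θ (b 0) (Aux18.dotHom r (Aux18.ee r j0) a))
          · unfold Aux18.q
            rw [Aux18.pow_split]
            field_simp
          · exact ne_of_gt (mul_pos hc hc)
          · unfold Aux18.w
            split <;> linarith
          · unfold Aux18.w
            split <;> linarith
    | succ i0 =>
      induction j using Fin.cases with
      | zero =>
        rw [Aux18.pairMarg_swap]
        by_cases hv : Aux18.ee r i0 = 0
        · rw [Aux18.pairMarg_hub_leaf, Aux18.marg_zero, Aux18.marg_succ_zero r θ hv]
          have hwpos := Aux18.w_pos θ hθ0 hθ1 (a 0) 0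
          apply Aux18.mem_ratio_one _ _ hδ
          · unfold Aux18.q
            rw [hv, Aux18.dotHom_zero, Aux18.pow_split]
            field_simp
          · apply ne_of_gt
            apply mul_pos (mul_pos hc (by linarith)) hc
        · rw [Aux18.pairMarg_hub_leaf, Aux18.marg_zero, Aux18.marg_succ_nonzero r θ hv]
          apply Aux18.mem_ratio
            (ρ := 2 * Aux18.w θ (a 0) (Aux18.dotHom r (Aux18.ee r i0) b))
          · unfold Aux18.q
            rw [Aux18.pow_split]
            field_simp
          · exact ne_of_gt (mul_pos hc hc)
          · unfold Aux18.w
            split <;> linarith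
          · unfold Aux18.w
            split <;> linarith
      | succ j0 =>
        have hne : i0 ≠ j0 := fun h => hij (by rw [h])
        by_cases hv0 : Aux18.ee r i0 = 0
        · have hv1 : Aux18.ee r j0 ≠ 0 := fun h =>
            hne ((Aux18.ee r).injective (hv0.trans h.symm))
          rw [Aux18.pairMarg_leaf_leaf r θ hne, Aux18.marg_succ_zero r θ hv0,
            Aux18.marg_succ_nonzero r θ hv1]
          have hwpos := Aux18.w_pos θ hθ0 hθ1 (a 0) 0
          apply Aux18.mem_ratio_one _ _ hδ
          · rw [show ∑ u, Aux18.q r θ (Aux18.ee r i0) u a * Aux18.q r θ (Aux18.ee r j0) u b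
                = ((2 : ℝ) ^ (r + 1))⁻¹ * Aux18.w θ (a 0) 0 from by
              rw [hv0]; exact Aux18.q_zero_left_sum r θ hv1 a b]
            rw [Aux18.pow_split]
            field_simp
          · apply ne_of_gt
            apply mul_pos (mul_pos hc (by linarith)) hc
        · by_cases hv1 : Aux18.ee r j0 = 0
          · rw [Aux18.pairMarg_leaf_leaf r θ hne, Aux18.marg_succ_nonzero r θ hv0,
              Aux18.marg_succ_zero r θ hv1]
            have hwpos := Aux18.w_pos θ hθ0 hθ1 (b 0) 0
            apply Aux18.mem_ratio_one _ _ hδ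
            · rw [show ∑ u, Aux18.q r θ (Aux18.ee r i0) u a * Aux18.q r θ (Aux18.ee r j0) u b
                  = ((2 : ℝ) ^ (r + 1))⁻¹ * Aux18.w θ (b 0) 0 from by
                rw [hv1]; exact Aux18.q_zero_right_sum r θ hv0 a b]
              rw [Aux18.pow_split]
              field_simp
            · apply ne_of_gt
              apply mul_pos hc (mul_pos hc (by linarith))
          · have hvv : Aux18.ee r i0 ≠ Aux18.ee r j0 := fun h => hne ((Aux18.ee r).injective h)
            rw [Aux18.pairMarg_leaf_leaf r θ hne, Aux18.qq_sum r θ hv0 hv1 hvv,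
              Aux18.marg_succ_nonzero r θ hv0, Aux18.marg_succ_nonzero r θ hv1]
            apply Aux18.mem_ratio_one rfl (ne_of_gt (mul_pos hc hc)) hδ
  · -- not PosSemidef
    show ¬ (MIMat (fun t => t * Real.log t) (Aux18.Pdist r θ)).PosSemidef
    intro hpsd
    set tt : ℝ := K * m / RL with httdef
    set cv : Fin (2 ^ (r + 2) + 1) → ℝ :=
      Fin.cons tt (fun i : Fin (2 ^ (r + 2)) => if Aux18.ee r i = 0 then 0 else -1) with hcvdef
    have h2 := hpsd.dotProduct_mulVec_nonneg cv
    have hstar : star cv = cv := funext fun i => star_trivial _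
    rw [hstar] at h2
    set M : Matrix (Fin (2 ^ (r + 2) + 1)) (Fin (2 ^ (r + 2) + 1)) ℝ :=
      MIMat (fun t => t * Real.log t) (Aux18.Pdist r θ) with hMdef
    have hMent : ∀ i j, M i j = fMI Aux18.sh (pairMarg (Aux18.Pdist r θ) i j) :=
      fun i j => rfl
    have hform : dotProduct cv (M.mulVec cv)
        = ∑ i, cv i * ∑ j, M i j * cv j := rfl
    have hcv0 : cv 0 = tt := rfl
    have hcvs : ∀ i0 : Fin (2 ^ (r + 2)),
        cv i0.succ = if Aux18.ee r i0 = 0 then 0 else -1 := fun i0 => Fin.cons_succ _ _ _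
    have hKcast : ((2 ^ (r + 2) - 1 : ℕ) : ℝ) = K := by
      have h1 : (1 : ℕ) ≤ 2 ^ (r + 2) := Nat.one_le_two_pow
      rw [hKdef]
      push_cast [h1]
      ring
    have hkn : ∀ c : ℝ, (∑ j0 : Fin (2 ^ (r + 2)),
        if Aux18.ee r j0 = 0 then (0 : ℝ) else c) = K * c := by
      intro c
      rw [Finset.sum_ite, Finset.sum_const, Finset.sum_const, Aux18.card_nonzero r]
      rw [smul_zero, zero_add, nsmul_eq_mul, hKcast]
    have hrow0 : ∑ j, M 0 j * cv j = RL * tt + K * (-m) := by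
      rw [Fin.sum_univ_succ]
      have h00 : M 0 0 * cv 0 = RL * tt := by
        rw [hMent, Aux18.entry_hub_hub, hcv0, hRLdef, hLdef]
        all_goals (push_cast; ring)
      have hterm : ∀ j0 : Fin (2 ^ (r + 2)), M 0 j0.succ * cv j0.succ
          = if Aux18.ee r j0 = 0 then 0 else -m := by
        intro j0
        by_cases hv : Aux18.ee r j0 = 0
        · rw [if_pos hv, hcvs, if_pos hv, mul_zero]
        · rw [if_neg hv, hcvs, if_neg hv, hMent, Aux18.entry_hub_leaf r θ hv, hmdef]
          ring
      rw [h00, Finset.sum_congr rfl fun j0 _ => hterm j0, hkn]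
    have hrows : ∀ i0 : Fin (2 ^ (r + 2)), Aux18.ee r i0 ≠ 0 →
        ∑ j, M i0.succ j * cv j = m * tt - RL := by
      intro i0 hv
      rw [Fin.sum_univ_succ]
      have h00 : M i0.succ 0 * cv 0 = m * tt := by
        rw [hMent, Aux18.entry_leaf_hub r θ hv, hcv0, hmdef]
      have hterm : ∀ j0 : Fin (2 ^ (r + 2)), M i0.succ j0.succ * cv j0.succ
          = if j0 = i0 then -RL else 0 := by
        intro j0
        by_cases hj : j0 = i0
        · subst hj
          rw [if_pos rfl, hcvs, if_neg hv, hMent, Aux18.entry_leaf_diag r θ hv,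
            hRLdef, hLdef]
          all_goals (push_cast; ring)
        · rw [if_neg hj]
          by_cases hv1 : Aux18.ee r j0 = 0
          · rw [hcvs, if_pos hv1, mul_zero]
          · rw [hMent, Aux18.entry_leaf_leaf r θ (fun h => hj h.symm) hv hv1, zero_mul]
      rw [h00, Finset.sum_congr rfl fun j0 _ => hterm j0,
        Finset.sum_ite_eq' univ i0 fun _ => -RL]
      simp only [Finset.mem_univ, if_true]
      ring
    have hQ : dotProduct cv (M.mulVec cv) = RL * tt ^ 2 - 2 * K * m * tt + K * RL := by
      rw [hform, Fin.sum_univ_succ, hcv0, hrow0]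
      have hterm : ∀ i0 : Fin (2 ^ (r + 2)), cv i0.succ * ∑ j, M i0.succ j * cv j
          = if Aux18.ee r i0 = 0 then 0 else -(m * tt - RL) := by
        intro i0
        by_cases hv : Aux18.ee r i0 = 0
        · rw [if_pos hv, hcvs, if_pos hv, zero_mul]
        · rw [if_neg hv, hcvs, if_neg hv, hrows i0 hv]
          ring
      rw [Finset.sum_congr rfl fun i0 _ => hterm i0, hkn]
      ring
    have hQneg : RL * tt ^ 2 - 2 * K * m * tt + K * RL < 0 := by
      have he : RL * tt ^ 2 - 2 * K * m * tt + K * RL = K * (RL ^ 2 - K * m ^ 2) / RL := by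
        rw [httdef]
        field_simp
        ring
      rw [he]
      apply div_neg_of_neg_of_pos _ hRLpos
      apply mul_neg_of_pos_of_neg hKpos
      linarith
    rw [hQ] at h2
    linarith
end
end
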